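/- arXiv:1704.01928 — 7 statements merged into one kernel-verified Lean document; each statement's English description precedes it below -/
import Mathlib

section
/- Suppose measurable functions V, φ : E → (0,∞) and L-images LV, Lφ satisfy: (a) -Lφ ≤ C·1_{O_n} for some set O_n with inf_{O_n} φ > 0 and inf_{O_m} φ > 0 for all m, (b) LV + C'·V^{1+ε}/φ^ε ≤ C''·φ for constants C'>0, C''≥0, and (c) V/φ → ∞ out of the sets O_m (i.e. for every R>0 there is m with V(x)/φ(x) ≥ R for x ∉ O_m), with V bounded. Then there exist constants A>0 and B>0 such that for every probability measure μ on E: μ(LV) - μ(V)·μ(Lφ)/μ(φ) ≤ A·μ(φ) - B·μ(V)^{1+ε}/μ(φ)^ε. -/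
/-!
On `O n` the function `φ` is bounded below, so (a) gives `-Lφ ≤ K φ` with `K = C / c`, and the
cross term `-μ(V) μ(Lφ) / μ(φ)` is at most `K μ(V)`. Integrating (b) and using Hölder's
inequality `μ(V)^{1+ε} ≤ μ(V^{1+ε}/φ^ε) μ(φ)^ε` gives
`μ(LV) ≤ C'' μ(φ) - C' μ(V)^{1+ε} / μ(φ)^ε`. Finally the homogeneous inequality
`K v ≤ A p + (C'/2) v^{1+ε} / p^ε` (split according to whether `v / p` exceeds
`(2K/C')^{1/ε}`) absorbs the cross term into half of the negative term.
-/

open MeasureTheory Set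

theorem rpow_integral_le_integral_rpow_div_mul {α : Type*} [MeasurableSpace α] {μ : Measure α}
    {V φ : α → ℝ} {ε : ℝ} (hε : 0 < ε) (hV₀ : ∀ x, 0 ≤ V x) (hφ₀ : ∀ x, 0 < φ x)
    (hV : AEStronglyMeasurable V μ) (hφ : AEStronglyMeasurable φ μ)
    (hVφ : Integrable (fun x => V x ^ (1 + ε) / φ x ^ ε) μ) (hφi : Integrable φ μ) :
    (∫ x, V x ∂μ) ^ (1 + ε) ≤ (∫ x, V x ^ (1 + ε) / φ x ^ ε ∂μ) * (∫ x, φ x ∂μ) ^ ε := by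
  have hp : 0 < 1 + ε := by linarith
  have hpq : (1 + ε).HolderConjugate ((1 + ε) / ε) :=
    (Real.holderConjugate_iff).2 ⟨by linarith, by field_simp⟩
  -- Hölder for `V = (V / φ ^ e) * φ ^ e` with `e = ε / (1 + ε)`
  obtain ⟨e, he⟩ : ∃ e, e = ε / (1 + ε) := ⟨_, rfl⟩
  have hφe_pos (x) : 0 < φ x ^ e := Real.rpow_pos_of_pos (hφ₀ x) e
  have hf₀ (x) : 0 ≤ V x / φ x ^ e := div_nonneg (hV₀ x) (hφe_pos x).le
  have hf_pow (x) : (V x / φ x ^ e) ^ (1 + ε) = V x ^ (1 + ε) / φ x ^ ε := by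
    rw [Real.div_rpow (hV₀ x) (hφe_pos x).le, ← Real.rpow_mul (hφ₀ x).le, he,
      div_mul_cancel₀ _ hp.ne']
  have hg_pow (x) : (φ x ^ e) ^ ((1 + ε) / ε) = φ x := by
    rw [← Real.rpow_mul (hφ₀ x).le, he, div_mul_div_cancel₀' hε.ne', div_self hp.ne',
      Real.rpow_one]
  have memLp_of_integrable_rpow {f : α → ℝ} {q : ℝ} (hq : 0 < q) (hf₀ : ∀ x, 0 ≤ f x)
      (hf : AEStronglyMeasurable f μ) (hfq : Integrable (fun x => f x ^ q) μ) :
      MemLp f (ENNReal.ofReal q) μ := by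
    refine (integrable_norm_rpow_iff hf (by simpa using hq) ENNReal.ofReal_ne_top).1 ?_
    simpa [ENNReal.toReal_ofReal hq.le, abs_of_nonneg (hf₀ _)] using hfq
  have hφe : AEStronglyMeasurable (fun x => φ x ^ e) μ :=
    (hφ.aemeasurable.pow_const e).aestronglyMeasurable
  have holder := integral_mul_le_Lp_mul_Lq_of_nonneg hpq (.of_forall hf₀)
    (.of_forall fun x => (hφe_pos x).le)
    (memLp_of_integrable_rpow (f := fun x => V x / φ x ^ e) hp hf₀
      (hV.aemeasurable.div hφe.aemeasurable).aestronglyMeasurable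
      (by simpa only [hf_pow] using hVφ))
    (memLp_of_integrable_rpow (f := fun x => φ x ^ e) (by positivity) (fun x => (hφe_pos x).le)
      hφe (by simpa only [hg_pow] using hφi))
  simp only [hf_pow, hg_pow, div_mul_cancel₀ _ (hφe_pos _).ne'] at holder
  have hI₀ : 0 ≤ ∫ x, V x ^ (1 + ε) / φ x ^ ε ∂μ :=
    integral_nonneg fun x =>
      div_nonneg (Real.rpow_nonneg (hV₀ x) _) (Real.rpow_nonneg (hφ₀ x).le _)
  have hφI₀ : 0 ≤ ∫ x, φ x ∂μ := integral_nonneg fun x => (hφ₀ x).le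
  calc (∫ x, V x ∂μ) ^ (1 + ε)
      ≤ ((∫ x, V x ^ (1 + ε) / φ x ^ ε ∂μ) ^ (1 / (1 + ε)) *
          (∫ x, φ x ∂μ) ^ (1 / ((1 + ε) / ε))) ^ (1 + ε) :=
        Real.rpow_le_rpow (integral_nonneg hV₀) holder hp.le
    _ = (∫ x, V x ^ (1 + ε) / φ x ^ ε ∂μ) * (∫ x, φ x ∂μ) ^ ε := by
        rw [Real.mul_rpow (by positivity) (by positivity), ← Real.rpow_mul hI₀,
          ← Real.rpow_mul hφI₀, one_div_mul_cancel hp.ne', Real.rpow_one, one_div_div,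
          div_mul_cancel₀ _ hp.ne']

theorem exists_mul_le_add_rpow_div_rpow {K B ε : ℝ} (hK : 0 ≤ K) (hB : 0 < B) (hε : 0 < ε) :
    ∃ A > 0, ∀ v p : ℝ, 0 ≤ v → 0 < p → K * v ≤ A * p + B * v ^ (1 + ε) / p ^ ε := by
  obtain ⟨R, hR⟩ : ∃ R, R = (K / B) ^ ε⁻¹ := ⟨_, rfl⟩
  have hR₀ : 0 ≤ R := hR ▸ by positivity
  have hRε : B * R ^ ε = K := by
    rw [hR, Real.rpow_inv_rpow (by positivity) hε.ne', mul_div_cancel₀ _ hB.ne']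
  refine ⟨K * R + 1, by positivity, fun v p hv hp => ?_⟩
  have hvp : B * v ^ (1 + ε) / p ^ ε = B * v * (v / p) ^ ε := by
    rw [Real.rpow_one_add' hv (by linarith), Real.div_rpow hv hp.le]
    ring
  rw [hvp]
  rcases le_or_gt v (R * p) with hle | hlt
  · have : K * v ≤ K * (R * p) := mul_le_mul_of_nonneg_left hle hK
    have : 0 ≤ B * v * (v / p) ^ ε := by positivity
    linarith
  · have hRv : R ^ ε ≤ (v / p) ^ ε :=
      Real.rpow_le_rpow hR₀ ((le_div_iff₀ hp).2 hlt.le) hε.le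
    have hKv : K * v = B * v * R ^ ε := by rw [← hRε]; ring
    have : 0 ≤ K * R * p := by positivity
    linarith [mul_le_mul_of_nonneg_left hRv (mul_nonneg hB.le hv)]

theorem le_div_mul_of_le_mul_indicator {E : Type*} {f φ : E → ℝ} {S : Set E} {C c : ℝ}
    (hC : 0 ≤ C) (hc : 0 < c) (hφ₀ : ∀ x, 0 ≤ φ x) (hφS : ∀ x ∈ S, c ≤ φ x)
    (hf : ∀ x, f x ≤ C * S.indicator (fun _ => 1) x) (x : E) : f x ≤ C / c * φ x := by
  refine (hf x).trans ?_
  by_cases hx : x ∈ S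
  · rw [indicator_of_mem hx, mul_one, div_mul_eq_mul_div, le_div_iff₀ hc]
    exact mul_le_mul_of_nonneg_left (hφS x hx) hC
  · rw [indicator_of_notMem hx, mul_zero]
    exact mul_nonneg (div_nonneg hC hc.le) (hφ₀ x)

theorem integral_sub_mul_div_le_of_lyapunov {E : Type*} [MeasurableSpace E] (μ : Measure E)
    [NeZero μ] {V φ LV Lφ : E → ℝ} {ε K A C' C'' : ℝ} (hε : 0 < ε)
    (hV₀ : ∀ x, 0 ≤ V x) (hφ₀ : ∀ x, 0 < φ x) (hV : Integrable V μ) (hφ : Integrable φ μ)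
    (hLV : Integrable LV μ) (hLφ : Integrable Lφ μ) (hC' : 0 < C')
    (hLφK : ∀ x, -Lφ x ≤ K * φ x)
    (hLVφ : ∀ x, LV x + C' * V x ^ (1 + ε) / φ x ^ ε ≤ C'' * φ x)
    (hA : ∀ v p : ℝ, 0 ≤ v → 0 < p → K * v ≤ A * p + C' / 2 * v ^ (1 + ε) / p ^ ε) :
    (∫ x, LV x ∂μ) - (∫ x, V x ∂μ) * (∫ x, Lφ x ∂μ) / (∫ x, φ x ∂μ) ≤
      (C'' + A) * ∫ x, φ x ∂μ - C' / 2 * (∫ x, V x ∂μ) ^ (1 + ε) / (∫ x, φ x ∂μ) ^ ε := by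
  have hLVφ' (x) : LV x + C' * (V x ^ (1 + ε) / φ x ^ ε) ≤ C'' * φ x :=
    mul_div_assoc C' _ _ ▸ hLVφ x
  have hg : Integrable (fun x => V x ^ (1 + ε) / φ x ^ ε) μ := by
    refine ((hφ.const_mul C'').sub hLV).div_const C' |>.mono' ?_ (.of_forall fun x => ?_)
    · exact ((hV.aemeasurable.pow_const _).div
        (hφ.aemeasurable.pow_const _)).aestronglyMeasurable
    · rw [Real.norm_of_nonneg (by have := hV₀ x; have := hφ₀ x; positivity), le_div_iff₀ hC',
        Pi.sub_apply]
      linarith [hLVφ' x]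
  have hφ_pos : 0 < ∫ x, φ x ∂μ := by
    rw [integral_pos_iff_support_of_nonneg (fun x => (hφ₀ x).le) hφ,
      Function.support_eq_univ fun x => (hφ₀ x).ne']
    exact Measure.measure_univ_pos.2 (NeZero.ne μ)
  have hV_nonneg : 0 ≤ ∫ x, V x ∂μ := integral_nonneg hV₀
  have hLV_int : (∫ x, LV x ∂μ) + C' * ∫ x, V x ^ (1 + ε) / φ x ^ ε ∂μ ≤ C'' * ∫ x, φ x ∂μ := by
    rw [← integral_const_mul, ← integral_const_mul, ← integral_add hLV (hg.const_mul C')]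
    exact integral_mono (hLV.add (hg.const_mul C')) (hφ.const_mul C'') hLVφ'
  have hLφ_int : -∫ x, Lφ x ∂μ ≤ K * ∫ x, φ x ∂μ := by
    rw [← integral_neg, ← integral_const_mul]
    exact integral_mono hLφ.neg (hφ.const_mul K) hLφK
  have hcross : -((∫ x, V x ∂μ) * (∫ x, Lφ x ∂μ) / (∫ x, φ x ∂μ)) ≤ K * ∫ x, V x ∂μ := by
    rw [← neg_div, div_le_iff₀ hφ_pos]
    linarith [mul_le_mul_of_nonneg_left hLφ_int hV_nonneg]
  have hholder := rpow_integral_le_integral_rpow_div_mul hε hV₀ hφ₀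
    hV.aestronglyMeasurable hφ.aestronglyMeasurable hg hφ
  rw [← div_le_iff₀ (by positivity)] at hholder
  have hyoung := hA _ _ hV_nonneg hφ_pos
  rw [mul_div_assoc (C' / 2)] at hyoung ⊢
  linarith [mul_le_mul_of_nonneg_left hholder hC'.le]

theorem stmt2_general {E : Type*} [MeasurableSpace E]
    (O : ℕ → Set E)
    (V φ LV Lφ : E → ℝ) (ε : ℝ) (hε : 0 < ε)
    (hVmeas : Measurable V) (hφmeas : Measurable φ)
    (hLVmeas : Measurable LV) (hLφmeas : Measurable Lφ)
    (hVbdd : ∃ C, ∀ x, |V x| ≤ C) (hφbdd : ∃ C, ∀ x, |φ x| ≤ C)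
    (hLVbdd : ∃ C, ∀ x, |LV x| ≤ C) (hLφbdd : ∃ C, ∀ x, |Lφ x| ≤ C)
    (hVpos : ∀ x, 0 < V x) (hφpos : ∀ x, 0 < φ x)
    (hφinf : ∀ m, ∃ c > 0, ∀ x ∈ O m, c ≤ φ x)
    -- (a) : `-Lφ ≤ C·1_{O n}`
    (ha : ∃ n : ℕ, ∃ C ≥ (0:ℝ), ∀ x, -Lφ x ≤ C * (O n).indicator (fun _ => (1:ℝ)) x)
    -- (b) : `LV + C'·V^{1+ε}/φ^ε ≤ C''·φ`
    (hb : ∃ C' > (0:ℝ), ∃ C'' ≥ (0:ℝ), ∀ x,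
      LV x + C' * V x ^ (1 + ε) / φ x ^ ε ≤ C'' * φ x) :
    ∃ A > (0:ℝ), ∃ B > (0:ℝ), ∀ μ : Measure E, IsProbabilityMeasure μ →
      (∫ x, LV x ∂μ) - (∫ x, V x ∂μ) * (∫ x, Lφ x ∂μ) / (∫ x, φ x ∂μ) ≤
        A * ∫ x, φ x ∂μ - B * (∫ x, V x ∂μ) ^ (1 + ε) / (∫ x, φ x ∂μ) ^ ε := by
  obtain ⟨n, C, hC, hLφC⟩ := ha
  obtain ⟨c, hc, hφc⟩ := hφinf n
  obtain ⟨C', hC', C'', hC'', hLVφ⟩ := hb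
  obtain ⟨A, hA, hyoung⟩ :=
    exists_mul_le_add_rpow_div_rpow (div_nonneg hC hc.le) (half_pos hC') hε
  refine ⟨C'' + A, by positivity, C' / 2, half_pos hC', fun μ _ => ?_⟩
  have integrable {f : E → ℝ} (hf : Measurable f) : (∃ C, ∀ x, |f x| ≤ C) → Integrable f μ :=
    fun ⟨C, hC⟩ => .of_bound hf.aestronglyMeasurable C (.of_forall hC)
  exact integral_sub_mul_div_le_of_lyapunov μ hε (fun x => (hVpos x).le) hφpos
    (integrable hVmeas hVbdd) (integrable hφmeas hφbdd) (integrable hLVmeas hLVbdd)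
    (integrable hLφmeas hLφbdd) hC'
    (le_div_mul_of_le_mul_indicator hC hc (fun x => (hφpos x).le) hφc hLφC) hLVφ hyoung

/-- The simple Lyapunov criterion (conditions (a) and (b)) implies the nonlinear Lyapunov
criterion: there are constants `A, B > 0` such that for every probability measure `μ`,
`μ(LV) - μ(V)·μ(Lφ)/μ(φ) ≤ A·μ(φ) - B·μ(V)^{1+ε}/μ(φ)^ε`. -/
theorem stmt2 {E : Type*} [MeasurableSpace E]
    (O : ℕ → Set E) (hOmeas : ∀ m, MeasurableSet (O m)) (hOmono : Monotone O)
    (hOcover : ⋃ m, O m = Set.univ)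
    (V φ LV Lφ : E → ℝ) (ε : ℝ) (hε : 0 < ε)
    (hVmeas : Measurable V) (hφmeas : Measurable φ)
    (hLVmeas : Measurable LV) (hLφmeas : Measurable Lφ)
    (hVbdd : ∃ C, ∀ x, |V x| ≤ C) (hφbdd : ∃ C, ∀ x, |φ x| ≤ C)
    (hLVbdd : ∃ C, ∀ x, |LV x| ≤ C) (hLφbdd : ∃ C, ∀ x, |Lφ x| ≤ C)
    (hVpos : ∀ x, 0 < V x) (hφpos : ∀ x, 0 < φ x)
    (hφinf : ∀ m, ∃ c > 0, ∀ x ∈ O m, c ≤ φ x)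
    -- (a) : `-Lφ ≤ C·1_{O n}`
    (ha : ∃ n : ℕ, ∃ C ≥ (0:ℝ), ∀ x, -Lφ x ≤ C * (O n).indicator (fun _ => (1:ℝ)) x)
    -- (b) : `LV + C'·V^{1+ε}/φ^ε ≤ C''·φ`
    (hb : ∃ C' > (0:ℝ), ∃ C'' ≥ (0:ℝ), ∀ x,
      LV x + C' * V x ^ (1 + ε) / φ x ^ ε ≤ C'' * φ x)
    -- (c) : `V/φ → ∞` out of the sets `O m`
    (hc : ∀ R > (0:ℝ), ∃ m : ℕ, ∀ x ∉ O m, R ≤ V x / φ x) :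
    ∃ A > (0:ℝ), ∃ B > (0:ℝ), ∀ μ : Measure E, IsProbabilityMeasure μ →
      (∫ x, LV x ∂μ) - (∫ x, V x ∂μ) * (∫ x, Lφ x ∂μ) / (∫ x, φ x ∂μ) ≤
        A * ∫ x, φ x ∂μ - B * (∫ x, V x ∂μ) ^ (1 + ε) / (∫ x, φ x ∂μ) ^ ε :=
  stmt2_general O V φ LV Lφ ε hε hVmeas hφmeas hLVmeas hLφmeas hVbdd hφbdd hLVbdd hLφbdd hVpos hφpos
    hφinf ha hb
end

section
/- Define for a Lotka-Volterra birth-death process with rates b_i(n)=λ_i+∑_j γ_{ij} n_j and d_i(n)=μ_i+∑_j c_{ij} n_j the quantities d̄(k)=sup_{n∈ℕ^d,|n|=k} |n|∑_i 1_{n_i=1} d_i(n) and d_(k)=inf_{n∈ℕ^d,|n|=k} ∑_i n_i[1_{n_i≠1} d_i(n) − b_i(n)]. If ∑_{i,j} x_i(c_{ij}−γ_{ij})x_j ≥ C'|x|² for all x∈ℝ₊^d with C'>0 and all parameters λ_i, μ_i, c_{ij}, γ_{ij} ≥ 0, then d̄(k) ≤ C k² for some constant C, d_(k) ≥ C'k²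 − Ck for some constant C, and consequently there exists η>0 such that for all sufficiently large k: d_(k) ≥ η·d̄(k) and d_(k)/k^{1+η} → ∞. -/
open Finset Filter

/-!
Both rates are affine in `n` with nonnegative coefficients, so on configurations with `|n| = k`
the total death rate is `O(k)`, which gives `d̄(k) = O(k²)`. In `d_(k)`, replacing
`1_{n_i≠1} d_i(n)` by `d_i(n)` costs at most `∑ d_i(n) = O(k)`, and `∑ n_i (d_i(n) - b_i(n))` is the
quadratic form of `c - Γ` at `n` plus a linear term, hence at least `C'k² - O(k)`.
So `d_(k) ≥ (C'/2) k²` eventually, which dominates `η d̄(k)` for small `η` and outgrows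
`k^{1+η}` for `η < 1`.
-/

/-- `d̄(k) = sup_{n∈ℕ^d, |n|=k} |n| ∑_i 1_{n_i=1} d_i(n)`. -/
noncomputable def dbar {d : ℕ} (dth : (Fin d → ℕ) → Fin d → ℝ) (k : ℕ) : ℝ :=
  sSup {y | ∃ n : Fin d → ℕ, (∀ i, 1 ≤ n i) ∧ (∑ i, n i = k) ∧
    y = (k : ℝ) * ∑ i, (if n i = 1 then dth n i else 0)}

/-- `d_(k) = inf_{n∈ℕ^d, |n|=k} ∑_i n_i [1_{n_i≠1} d_i(n) − b_i(n)]`. -/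
noncomputable def dund {d : ℕ} (b dth : (Fin d → ℕ) → Fin d → ℝ) (k : ℕ) : ℝ :=
  sInf {y | ∃ n : Fin d → ℕ, (∀ i, 1 ≤ n i) ∧ (∑ i, n i = k) ∧
    y = ∑ i, (n i : ℝ) * ((if n i ≠ 1 then dth n i else 0) - b n i)}

section Configurations

variable {d : ℕ}

theorem card_le_sum_of_one_le {n : Fin d → ℕ} (hn : ∀ i, 1 ≤ n i) : d ≤ ∑ i, n i := by
  simpa using card_nsmul_le_sum univ n 1 fun i _ => hn i

theorem exists_config_of_le (hd : 0 < d) {k : ℕ} (hk : d ≤ k) :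
    ∃ n : Fin d → ℕ, (∀ i, 1 ≤ n i) ∧ ∑ i, n i = k :=
  ⟨fun i => 1 + if i = ⟨0, hd⟩ then k - d else 0, fun _ => Nat.le_add_right _ _, by
    simp only [sum_add_distrib, sum_const, card_univ, Fintype.card_fin, smul_eq_mul, mul_one,
      sum_ite_eq', mem_univ, if_true]
    omega⟩

theorem dbar_le {dth : (Fin d → ℕ) → Fin d → ℝ} {k : ℕ} {B : ℝ} (hB : 0 ≤ B)
    (h : ∀ n : Fin d → ℕ, (∀ i, 1 ≤ n i) → ∑ i, n i = k →
      (k : ℝ) * ∑ i, (if n i = 1 then dth n i else 0) ≤ B) :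
    dbar dth k ≤ B :=
  Real.sSup_le (by rintro _ ⟨n, hn, hk, rfl⟩; exact h n hn hk) hB

theorem dund_eq_zero_of_lt (b dth : (Fin d → ℕ) → Fin d → ℝ) {k : ℕ} (hk : k < d) :
    dund b dth k = 0 := by
  rw [dund, ← Real.sInf_empty]
  congr
  refine Set.eq_empty_of_forall_notMem ?_
  rintro _ ⟨n, hn, rfl, -⟩
  exact hk.not_ge (card_le_sum_of_one_le hn)

theorem le_dund (hd : 0 < d) {b dth : (Fin d → ℕ) → Fin d → ℝ} {k : ℕ} (hk : d ≤ k) {B : ℝ}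
    (h : ∀ n : Fin d → ℕ, (∀ i, 1 ≤ n i) → ∑ i, n i = k →
      B ≤ ∑ i, (n i : ℝ) * ((if n i ≠ 1 then dth n i else 0) - b n i)) :
    B ≤ dund b dth k := by
  obtain ⟨n, hn, hsum⟩ := exists_config_of_le hd hk
  exact le_csInf ⟨_, n, hn, hsum, rfl⟩ (by rintro _ ⟨n, hn, hk, rfl⟩; exact h n hn hk)

end Configurations

theorem sub_le_mul_ite_ne_one_sub (m : ℕ) {δ β : ℝ} (hδ : 0 ≤ δ) :
    m * (δ - β) - δ ≤ m * ((if m ≠ 1 then δ else 0) - β) := by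
  by_cases h : m = 1
  · simp [h]
  · simpa [h] using hδ

section LotkaVolterra

variable {d : ℕ}

def lvRate (a : Fin d → ℝ) (M : Fin d → Fin d → ℝ) (n : Fin d → ℕ) (i : Fin d) : ℝ :=
  a i + ∑ j, M i j * n j

variable {a : Fin d → ℝ} {M : Fin d → Fin d → ℝ}

theorem lvRate_nonneg (ha : ∀ i, 0 ≤ a i) (hM : ∀ i j, 0 ≤ M i j) (n : Fin d → ℕ) (i : Fin d) :
    0 ≤ lvRate a M n i :=
  add_nonneg (ha i) (sum_nonneg fun j _ => mul_nonneg (hM i j) (Nat.cast_nonneg _))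

theorem cast_le_sum_cast (n : Fin d → ℕ) (j : Fin d) : (n j : ℝ) ≤ ∑ i, (n i : ℝ) :=
  single_le_sum (fun i _ => Nat.cast_nonneg (n i)) (mem_univ j)

theorem sum_lvRate_le (hM : ∀ i j, 0 ≤ M i j) (n : Fin d → ℕ) :
    ∑ i, lvRate a M n i ≤ ∑ i, a i + (∑ i, ∑ j, M i j) * ∑ i, (n i : ℝ) := by
  simp only [lvRate, sum_add_distrib, sum_mul]
  gcongr with i _ j _
  · exact hM i j
  · exact cast_le_sum_cast n j

theorem sum_mul_le_sum_mul_sum_cast (ha : ∀ i, 0 ≤ a i) (n : Fin d → ℕ) :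
    ∑ i, (n i : ℝ) * a i ≤ (∑ i, a i) * ∑ i, (n i : ℝ) := by
  rw [sum_mul]
  refine sum_le_sum fun i _ => ?_
  rw [mul_comm]
  exact mul_le_mul_of_nonneg_left (cast_le_sum_cast n i) (ha i)

theorem sum_mul_lvRate_sub_lvRate (lam mu : Fin d → ℝ) (Γ c : Fin d → Fin d → ℝ)
    (n : Fin d → ℕ) :
    ∑ i, (n i : ℝ) * (lvRate mu c n i - lvRate lam Γ n i) =
      ∑ i, (n i : ℝ) * mu i - ∑ i, (n i : ℝ) * lam i +
        ∑ i, ∑ j, (n i : ℝ) * (c i j - Γ i j) * n j := by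
  simp only [lvRate, ← sum_sub_distrib, ← sum_add_distrib]
  refine sum_congr rfl fun i _ => ?_
  have hcross : ∑ j, (n i : ℝ) * (c i j - Γ i j) * n j =
      n i * (∑ j, c i j * n j - ∑ j, Γ i j * n j) := by
    rw [← sum_sub_distrib, mul_sum]
    exact sum_congr rfl fun j _ => by ring
  rw [hcross]
  ring

variable {lam mu : Fin d → ℝ} {Γ c : Fin d → Fin d → ℝ}

theorem dbar_lvRate_le (hmu : ∀ i, 0 ≤ mu i) (hc : ∀ i j, 0 ≤ c i j) (k : ℕ) :
    dbar (lvRate mu c) k ≤ (∑ i, mu i + ∑ i, ∑ j, c i j) * k ^ 2 := by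
  have hmu' : 0 ≤ ∑ i, mu i := sum_nonneg fun i _ => hmu i
  have hc' : 0 ≤ ∑ i, ∑ j, c i j := sum_nonneg fun i _ => sum_nonneg fun j _ => hc i j
  have hk : (k : ℝ) ≤ k ^ 2 := by exact_mod_cast Nat.le_self_pow two_ne_zero k
  refine dbar_le (by positivity) fun n _ hn => ?_
  have hsum : ∑ i, (if n i = 1 then lvRate mu c n i else 0) ≤
      ∑ i, mu i + (∑ i, ∑ j, c i j) * k := by
    calc _ ≤ ∑ i, lvRate mu c n i := sum_le_sum fun i _ => by
          split_ifs
          exacts [le_rfl, lvRate_nonneg hmu hc n i]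
      _ ≤ _ := by
          rw [← hn, Nat.cast_sum]
          exact sum_lvRate_le hc n
  calc (k : ℝ) * _ ≤ k * (∑ i, mu i + (∑ i, ∑ j, c i j) * k) :=
        mul_le_mul_of_nonneg_left hsum k.cast_nonneg
    _ ≤ _ := by nlinarith

theorem sq_sub_le_sum_mul_ite_sub_lvRate (hlam : ∀ i, 0 ≤ lam i) (hmu : ∀ i, 0 ≤ mu i)
    (hc : ∀ i j, 0 ≤ c i j) {C' : ℝ}
    (hquad : ∀ x : Fin d → ℝ, (∀ i, 0 ≤ x i) →
      C' * (∑ i, x i) ^ 2 ≤ ∑ i, ∑ j, x i * (c i j - Γ i j) * x j)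
    (n : Fin d → ℕ) :
    C' * (∑ i, (n i : ℝ)) ^ 2 - (∑ i, lam i + ∑ i, ∑ j, c i j) * ∑ i, (n i : ℝ) - ∑ i, mu i ≤
      ∑ i, (n i : ℝ) * ((if n i ≠ 1 then lvRate mu c n i else 0) - lvRate lam Γ n i) := by
  calc _ ≤ ∑ i, (n i : ℝ) * (lvRate mu c n i - lvRate lam Γ n i) - ∑ i, lvRate mu c n i := by
        have hQ := hquad _ fun i => (n i).cast_nonneg
        have hlamn := sum_mul_le_sum_mul_sum_cast hlam n
        have hdeath := sum_lvRate_le (a := mu) hc n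
        have hmun : 0 ≤ ∑ i, (n i : ℝ) * mu i :=
          sum_nonneg fun i _ => mul_nonneg (n i).cast_nonneg (hmu i)
        rw [sum_mul_lvRate_sub_lvRate]
        linarith
    _ = ∑ i, ((n i : ℝ) * (lvRate mu c n i - lvRate lam Γ n i) - lvRate mu c n i) :=
        (sum_sub_distrib _ _).symm
    _ ≤ _ := sum_le_sum fun i _ => sub_le_mul_ite_ne_one_sub _ (lvRate_nonneg hmu hc n i)

theorem le_dund_lvRate (hd : 0 < d) (hlam : ∀ i, 0 ≤ lam i) (hmu : ∀ i, 0 ≤ mu i)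
    (hc : ∀ i j, 0 ≤ c i j) {C' : ℝ} (hC' : 0 ≤ C')
    (hquad : ∀ x : Fin d → ℝ, (∀ i, 0 ≤ x i) →
      C' * (∑ i, x i) ^ 2 ≤ ∑ i, ∑ j, x i * (c i j - Γ i j) * x j)
    (k : ℕ) :
    C' * k ^ 2 - (∑ i, lam i + ∑ i, mu i + ∑ i, ∑ j, c i j + C' * d) * k ≤
      dund (lvRate lam Γ) (lvRate mu c) k := by
  have hlam' : 0 ≤ ∑ i, lam i := sum_nonneg fun i _ => hlam i
  have hmu' : 0 ≤ ∑ i, mu i := sum_nonneg fun i _ => hmu i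
  have hc' : 0 ≤ ∑ i, ∑ j, c i j := sum_nonneg fun i _ => sum_nonneg fun j _ => hc i j
  rcases lt_or_ge k d with hk | hk
  · have hkd : (k : ℝ) ≤ d := by exact_mod_cast hk.le
    rw [dund_eq_zero_of_lt _ _ hk]
    have hk0 : (0 : ℝ) ≤ k := k.cast_nonneg
    nlinarith [mul_le_mul_of_nonneg_left hkd (mul_nonneg hC' hk0),
      mul_nonneg (add_nonneg (add_nonneg hlam' hmu') hc') hk0]
  · have hk1 : (1 : ℝ) ≤ k := by exact_mod_cast hd.trans_le hk
    refine le_dund hd hk fun n _ hn => ?_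
    have h := sq_sub_le_sum_mul_ite_sub_lvRate hlam hmu hc hquad n
    rw [show ∑ i, (n i : ℝ) = k by exact_mod_cast hn] at h
    nlinarith [mul_le_mul_of_nonneg_left hk1 hmu',
      mul_nonneg (mul_nonneg hC' d.cast_nonneg) (k.cast_nonneg (α := ℝ))]

end LotkaVolterra

theorem eventually_half_mul_sq_le {f : ℕ → ℝ} {C C' : ℝ} (hC' : 0 < C')
    (hf : ∀ k : ℕ, C' * k ^ 2 - C * k ≤ f k) :
    ∀ᶠ k : ℕ in atTop, C' / 2 * k ^ 2 ≤ f k := by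
  filter_upwards [tendsto_natCast_atTop_atTop.eventually_ge_atTop (2 * C / C')] with k hk
  have hCk : 2 * C ≤ C' * k := by rwa [div_le_iff₀' hC'] at hk
  nlinarith [hf k, k.cast_nonneg (α := ℝ)]

theorem tendsto_div_rpow_atTop_of_eventually_mul_sq_le {f : ℕ → ℝ} {a η : ℝ} (ha : 0 < a)
    (hη : η < 1) (hf : ∀ᶠ k : ℕ in atTop, a * k ^ 2 ≤ f k) :
    Tendsto (fun k : ℕ => f k / (k : ℝ) ^ (1 + η)) atTop atTop := by
  have hlim : Tendsto (fun k : ℕ => a * (k : ℝ) ^ (1 - η)) atTop atTop :=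
    ((tendsto_rpow_atTop (by linarith)).comp tendsto_natCast_atTop_atTop).const_mul_atTop ha
  refine tendsto_atTop_mono' atTop ?_ hlim
  filter_upwards [hf, eventually_gt_atTop 0] with k hk hk0
  have hkpos : (0 : ℝ) < k := by exact_mod_cast hk0
  have hpow : (k : ℝ) ^ (1 - η) = k ^ 2 / k ^ (1 + η) := by
    rw [← Real.rpow_natCast, ← Real.rpow_sub hkpos]
    congr 1
    push_cast
    ring
  rw [hpow, ← mul_div_assoc]
  gcongr

theorem exists_pos_eventually_mul_le_and_tendsto {f g : ℕ → ℝ} {A C C' : ℝ} (hA : 0 ≤ A)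
    (hC' : 0 < C') (hg : ∀ k : ℕ, g k ≤ A * k ^ 2) (hf : ∀ k : ℕ, C' * k ^ 2 - C * k ≤ f k) :
    ∃ η > 0, (∀ᶠ k in atTop, η * g k ≤ f k) ∧
      Tendsto (fun k : ℕ => f k / (k : ℝ) ^ (1 + η)) atTop atTop := by
  obtain ⟨η, hη, hη1, hηA⟩ : ∃ η : ℝ, 0 < η ∧ η < 1 ∧ η * A ≤ C' / 2 := by
    refine ⟨min (1 / 2) (C' / (2 * (A + 1))), by positivity, by norm_num, ?_⟩
    calc _ ≤ C' / (2 * (A + 1)) * (A + 1) :=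
          mul_le_mul (min_le_right _ _) (by linarith) hA (by positivity)
      _ = C' / 2 := by field_simp
  have hhalf := eventually_half_mul_sq_le hC' hf
  refine ⟨η, hη, ?_, tendsto_div_rpow_atTop_of_eventually_mul_sq_le (by positivity) hη1 hhalf⟩
  filter_upwards [hhalf] with k hk
  calc η * g k ≤ η * A * k ^ 2 := by
        rw [mul_assoc]
        exact mul_le_mul_of_nonneg_left (hg k) hη.le
    _ ≤ C' / 2 * k ^ 2 := by gcongr
    _ ≤ f k := hk

theorem stmt5_general (d : ℕ) (hd : 2 ≤ d) (lam mu : Fin d → ℝ) (Γ c : Fin d → Fin d → ℝ)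
    (hlam : ∀ i, 0 ≤ lam i) (hmu : ∀ i, 0 ≤ mu i)
    (hcmat : ∀ i j, 0 ≤ c i j)
    (C' : ℝ) (hC' : 0 < C')
    (hquad : ∀ x : Fin d → ℝ, (∀ i, 0 ≤ x i) →
      C' * (∑ i, x i) ^ 2 ≤ ∑ i, ∑ j, x i * (c i j - Γ i j) * x j)
    (b dth : (Fin d → ℕ) → Fin d → ℝ)
    (hb : ∀ n i, b n i = lam i + ∑ j, Γ i j * (n j : ℝ))
    (hdth : ∀ n i, dth n i = mu i + ∑ j, c i j * (n j : ℝ)) :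
    (∃ C : ℝ, ∀ k : ℕ, dbar dth k ≤ C * (k : ℝ) ^ 2) ∧
    (∃ C : ℝ, ∀ k : ℕ, C' * (k : ℝ) ^ 2 - C * (k : ℝ) ≤ dund b dth k) ∧
    ∃ η > (0:ℝ), (∃ K : ℕ, ∀ k ≥ K, η * dbar dth k ≤ dund b dth k) ∧
      Tendsto (fun k : ℕ => dund b dth k / (k : ℝ) ^ (1 + η)) atTop atTop := by
  obtain rfl : b = lvRate lam Γ := funext₂ hb
  obtain rfl : dth = lvRate mu c := funext₂ hdth
  have hdbar := dbar_lvRate_le hmu hcmat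
  have hdund := le_dund_lvRate (by omega) hlam hmu hcmat hC'.le hquad
  have hA : 0 ≤ ∑ i, mu i + ∑ i, ∑ j, c i j :=
    add_nonneg (sum_nonneg fun i _ => hmu i)
      (sum_nonneg fun i _ => sum_nonneg fun j _ => hcmat i j)
  obtain ⟨η, hη, hle, hlim⟩ := exists_pos_eventually_mul_le_and_tendsto hA hC' hdbar hdund
  exact ⟨⟨_, hdbar⟩, ⟨_, hdund⟩, η, hη, eventually_atTop.mp hle, hlim⟩

/-- For Lotka-Volterra rates with a coercive competition matrix, `d̄(k) ≤ Ck²`,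
`d_(k) ≥ C'k² − Ck`, and consequently `d_(k) ≥ η d̄(k)` for large `k` and
`d_(k)/k^{1+η} → ∞`. -/
theorem stmt5 (d : ℕ) (hd : 2 ≤ d) (lam mu : Fin d → ℝ) (Γ c : Fin d → Fin d → ℝ)
    (hlam : ∀ i, 0 ≤ lam i) (hmu : ∀ i, 0 ≤ mu i)
    (hΓ : ∀ i j, 0 ≤ Γ i j) (hcmat : ∀ i j, 0 ≤ c i j)
    (C' : ℝ) (hC' : 0 < C')
    (hquad : ∀ x : Fin d → ℝ, (∀ i, 0 ≤ x i) →
      C' * (∑ i, x i) ^ 2 ≤ ∑ i, ∑ j, x i * (c i j - Γ i j) * x j)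
    (b dth : (Fin d → ℕ) → Fin d → ℝ)
    (hb : ∀ n i, b n i = lam i + ∑ j, Γ i j * (n j : ℝ))
    (hdth : ∀ n i, dth n i = mu i + ∑ j, c i j * (n j : ℝ)) :
    (∃ C : ℝ, ∀ k : ℕ, dbar dth k ≤ C * (k : ℝ) ^ 2) ∧
    (∃ C : ℝ, ∀ k : ℕ, C' * (k : ℝ) ^ 2 - C * (k : ℝ) ≤ dund b dth k) ∧
    ∃ η > (0:ℝ), (∃ K : ℕ, ∀ k ≥ K, η * dbar dth k ≤ dund b dth k) ∧
      Tendsto (fun k : ℕ => dund b dth k / (k : ℝ) ^ (1 + η)) atTop atTop :=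
  stmt5_general d hd lam mu Γ c hlam hmu hcmat C' hC' hquad b dth hb hdth
end

section
/- Let β>1 and φ(n) = ∑_{k=|n|+1}^{∞} k^{-β} for n∈ℕ^d, φ=0 on ℤ₊^d∖ℕ^d. Then for the birth-death generator L one has Lφ(n) ≥ |n|^{-β} [d_(|n|) − d̄(|n|)/(β−1)] for all n∈ℕ^d, where d_(k)=inf_{m:|m|=k} ∑_i m_i(1_{m_i≠1} d_i(m)−b_i(m)) and d̄(k)=sup_{m:|m|=k} |m| ∑_i 1_{m_i=1} d_i(m). Consequently, if d_(k) ≥ η d̄(k) for all large k, there exists β>1 such that Lφ(n) ≥ 0 for all n with |n| large enough. -/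
open Finset

/-- The function `φ(n) = ∑_{k=|n|+1}^∞ k^{-β}` on `ℕ^d`, extended by `0` when some
coordinate vanishes. -/
noncomputable def phiFun {d : ℕ} (β : ℝ) (m : Fin d → ℕ) : ℝ :=
  if ∀ i, 1 ≤ m i then ∑' k : ℕ, ((∑ i, (m i : ℝ)) + 1 + (k : ℝ)) ^ (-β) else 0

/-- Generator of the multitype birth-death process applied to a function `f`. -/
noncomputable def bdGen7 {d : ℕ} (b dth : (Fin d → ℕ) → Fin d → ℝ)
    (f : (Fin d → ℕ) → ℝ) (n : Fin d → ℕ) : ℝ :=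
  ∑ j, (f (fun i => n i + if i = j then 1 else 0) - f n) * (n j : ℝ) * b n j +
  ∑ j, (f (fun i => n i - if i = j then 1 else 0) - f n) * (n j : ℝ) * dth n j

/-- `d_(k)`. -/
noncomputable def dund7 {d : ℕ} (b dth : (Fin d → ℕ) → Fin d → ℝ) (k : ℕ) : ℝ :=
  sInf {y | ∃ m : Fin d → ℕ, (∀ i, 1 ≤ m i) ∧ (∑ i, m i = k) ∧
    y = ∑ i, (m i : ℝ) * ((if m i ≠ 1 then dth m i else 0) - b m i)}

/-- `d̄(k)`. -/
noncomputable def dbar7 {d : ℕ} (dth : (Fin d → ℕ) → Fin d → ℝ) (k : ℕ) : ℝ :=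
  sSup {y | ∃ m : Fin d → ℕ, (∀ i, 1 ≤ m i) ∧ (∑ i, m i = k) ∧
    y = (k : ℝ) * ∑ i, (if m i = 1 then dth m i else 0)}

/-! For `n` with all coordinates positive, `φ(n) = T(|n|)` with `T(a) = ∑_{k>a} k^{-β}`, so a
birth changes `φ` by `-(|n|+1)^{-β}`, a death of a type with `n_i ≥ 2` by `+|n|^{-β}`, and the
death of the last individual of a type sends `φ` to `0`, a loss of `T(|n|) ≤ |n|^{1-β}/(β-1)`.
The tail bound comes from the tangent-line inequality `(β-1)(x+1)^{-β} ≤ x^{1-β} - (x+1)^{1-β}`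
summed telescopically. Comparing term by term and bounding the sums over `i` by `d_(|n|)` and
`d̄(|n|)` gives the drift bound; for the second claim take `β = 1 + 1/η`. -/

noncomputable def rpowTail (β a : ℝ) : ℝ := ∑' k : ℕ, (a + 1 + k) ^ (-β)

section rpowTail

variable {β a : ℝ}

theorem rpowTail_summable (hβ : 1 < β) (ha : 0 ≤ a) :
    Summable fun k : ℕ => (a + 1 + k) ^ (-β) := by
  have hshift : Summable fun k : ℕ => ((k + 1 : ℕ) : ℝ) ^ (-β) :=
    (summable_nat_add_iff 1).2 (Real.summable_nat_rpow.2 (by linarith))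
  refine Summable.of_nonneg_of_le (fun k => by positivity) (fun k => ?_) hshift
  exact Real.rpow_le_rpow_of_nonpos (by positivity) (by push_cast; linarith) (by linarith)

theorem rpowTail_eq_add (hβ : 1 < β) (ha : 0 ≤ a) :
    rpowTail β a = (a + 1) ^ (-β) + rpowTail β (a + 1) := by
  rw [rpowTail, (rpowTail_summable hβ ha).tsum_eq_zero_add, rpowTail]
  simp only [Nat.cast_zero, add_zero, Nat.cast_add, Nat.cast_one]
  congr 1
  exact tsum_congr fun k => by ring_nf

theorem mul_add_one_rpow_neg_le_sub (hβ : 1 ≤ β) {x : ℝ} (hx : 0 < x) :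
    (β - 1) * (x + 1) ^ (-β) ≤ x ^ (1 - β) - (x + 1) ^ (1 - β) := by
  have bernoulli : 1 + β * x⁻¹ ≤ (1 + x⁻¹) ^ β :=
    one_add_mul_self_le_rpow_one_add (by linarith [inv_pos.2 hx]) hβ
  have hsplit : (1 + x⁻¹) ^ β = (x + 1) ^ β * x ^ (-β) := by
    rw [show 1 + x⁻¹ = (x + 1) * x⁻¹ by field_simp, Real.mul_rpow (by positivity) (by positivity),
      Real.inv_rpow hx.le, Real.rpow_neg hx.le]
  have hcancel : (x + 1) ^ β * (x + 1) ^ (-β) = 1 := by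
    rw [← Real.rpow_add (by positivity)]; simp
  have key : (x + β) * (x + 1) ^ (-β) ≤ x * x ^ (-β) :=
    calc (x + β) * (x + 1) ^ (-β) = x * (x + 1) ^ (-β) * (1 + β * x⁻¹) := by field_simp
      _ ≤ x * (x + 1) ^ (-β) * ((x + 1) ^ β * x ^ (-β)) :=
        mul_le_mul_of_nonneg_left (hsplit ▸ bernoulli) (by positivity)
      _ = x * x ^ (-β) := by linear_combination x * x ^ (-β) * hcancel
  rw [show 1 - β = 1 + -β by ring, Real.rpow_add hx, Real.rpow_add (by positivity),
    Real.rpow_one, Real.rpow_one]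
  linarith

theorem rpowTail_le (hβ : 1 < β) (ha : 0 < a) : rpowTail β a ≤ a ^ (1 - β) / (β - 1) := by
  have hβ1 : 0 < β - 1 := by linarith
  set f : ℕ → ℝ := fun k => (a + k) ^ (1 - β) / (β - 1)
  refine Real.tsum_le_of_sum_range_le (fun k => by positivity) fun N => ?_
  calc ∑ k ∈ range N, (a + 1 + k) ^ (-β) ≤ ∑ k ∈ range N, (f k - f (k + 1)) := by
        refine sum_le_sum fun k _ => ?_
        rw [← sub_div, le_div_iff₀ hβ1, mul_comm]
        push_cast
        rw [show a + 1 + (k : ℝ) = a + k + 1 by ring, ← add_assoc]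
        exact mul_add_one_rpow_neg_le_sub hβ.le (by positivity)
    _ = f 0 - f N := sum_range_sub' f N
    _ ≤ a ^ (1 - β) / (β - 1) := by
        have : 0 ≤ f N := by positivity
        simp only [f, Nat.cast_zero, add_zero] at this ⊢
        linarith

end rpowTail

section phiFun

variable {d : ℕ} {β : ℝ} {n : Fin d → ℕ}

theorem phiFun_of_one_le (hn : ∀ i, 1 ≤ n i) : phiFun β n = rpowTail β (∑ i, (n i : ℝ)) := by
  rw [phiFun, if_pos hn, rpowTail]

theorem phiFun_birth_sub (hβ : 1 < β) (hn : ∀ i, 1 ≤ n i) (j : Fin d) :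
    phiFun β (fun i => n i + if i = j then 1 else 0) - phiFun β n =
      -(∑ i, (n i : ℝ) + 1) ^ (-β) := by
  have hsum : ∑ i, ((n i + if i = j then 1 else 0 : ℕ) : ℝ) = ∑ i, (n i : ℝ) + 1 := by
    push_cast
    rw [sum_add_distrib, sum_ite_eq', if_pos (mem_univ j)]
  rw [phiFun_of_one_le fun i => (hn i).trans (Nat.le_add_right _ _), phiFun_of_one_le hn, hsum,
    rpowTail_eq_add hβ (a := ∑ i, (n i : ℝ)) (by positivity)]
  ring

theorem phiFun_death_of_eq_one {j : Fin d} (hj : n j = 1) :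
    phiFun β (fun i => n i - if i = j then 1 else 0) = 0 := by
  rw [phiFun, if_neg fun h => by simpa [hj] using h j]

theorem phiFun_death_sub_of_ne_one (hβ : 1 < β) (hn : ∀ i, 1 ≤ n i) {j : Fin d} (hj : n j ≠ 1) :
    phiFun β (fun i => n i - if i = j then 1 else 0) - phiFun β n =
      (∑ i, (n i : ℝ)) ^ (-β) := by
  have hj2 : 2 ≤ n j := by have := hn j; omega
  have hn' : ∀ i, 1 ≤ n i - if i = j then 1 else 0 := by
    intro i
    split_ifs with h
    · subst h; omega
    · exact hn i
  have hcast : ∀ i, ((n i - if i = j then 1 else 0 : ℕ) : ℝ) = n i - if i = j then 1 else 0 := by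
    intro i
    split_ifs <;> simp [Nat.cast_sub (hn i)]
  have hsum : ∑ i, ((n i - if i = j then 1 else 0 : ℕ) : ℝ) = ∑ i, (n i : ℝ) - 1 := by
    simp only [hcast, sum_sub_distrib, sum_ite_eq', if_pos (mem_univ j)]
  have hle : (n j : ℝ) ≤ ∑ i, (n i : ℝ) :=
    single_le_sum (fun i _ => Nat.cast_nonneg (n i)) (mem_univ j)
  have htail := rpowTail_eq_add hβ (a := ∑ i, (n i : ℝ) - 1)
    (by have : (2 : ℝ) ≤ n j := by exact_mod_cast hj2
        linarith)
  rw [sub_add_cancel] at htail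
  rw [phiFun_of_one_le hn', phiFun_of_one_le hn, hsum, htail]
  ring

end phiFun

theorem finite_setOf_exists_sum_eq {α : Type*} {d k : ℕ} (F : (Fin d → ℕ) → α) :
    {y | ∃ m : Fin d → ℕ, (∀ i, 1 ≤ m i) ∧ ∑ i, m i = k ∧ y = F m}.Finite := by
  refine ((Set.Finite.pi fun _ => Set.finite_Iic k).image F).subset ?_
  rintro y ⟨m, -, hm, rfl⟩
  refine ⟨m, fun i _ => ?_, rfl⟩
  exact hm ▸ single_le_sum (fun i _ => Nat.zero_le (m i)) (mem_univ i)

theorem dund7_le {d : ℕ} (b dth : (Fin d → ℕ) → Fin d → ℝ) {n : Fin d → ℕ}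
    (hn : ∀ i, 1 ≤ n i) :
    dund7 b dth (∑ i, n i) ≤ ∑ i, (n i : ℝ) * ((if n i ≠ 1 then dth n i else 0) - b n i) :=
  csInf_le (finite_setOf_exists_sum_eq _).bddBelow ⟨n, hn, rfl, rfl⟩

theorem le_dbar7 {d : ℕ} (dth : (Fin d → ℕ) → Fin d → ℝ) {n : Fin d → ℕ}
    (hn : ∀ i, 1 ≤ n i) :
    (∑ i, (n i : ℝ)) * (∑ i, if n i = 1 then dth n i else 0) ≤ dbar7 dth (∑ i, n i) := by
  rw [← Nat.cast_sum]
  exact le_csSup (finite_setOf_exists_sum_eq _).bddAbove ⟨n, hn, rfl, rfl⟩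

section drift

variable {d : ℕ} {β : ℝ} {n : Fin d → ℕ} {b dth : (Fin d → ℕ) → Fin d → ℝ}

theorem drift_term_le (hβ : 1 < β) (hn : ∀ i, 1 ≤ n i) (j : Fin d) (hb : 0 ≤ b n j)
    (hdth : 0 ≤ dth n j) :
    (∑ i, (n i : ℝ)) ^ (-β) * ((n j : ℝ) * ((if n j ≠ 1 then dth n j else 0) - b n j) -
        (∑ i, (n i : ℝ)) * (if n j = 1 then dth n j else 0) / (β - 1)) ≤
      (phiFun β (fun i => n i + if i = j then 1 else 0) - phiFun β n) * n j * b n j +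
        (phiFun β (fun i => n i - if i = j then 1 else 0) - phiFun β n) * n j * dth n j := by
  have hs : 1 ≤ ∑ i, (n i : ℝ) := by
    have : (1 : ℝ) ≤ n j := by exact_mod_cast hn j
    exact this.trans (single_le_sum (fun i _ => Nat.cast_nonneg (n i)) (mem_univ j))
  have hmono : (∑ i, (n i : ℝ) + 1) ^ (-β) ≤ (∑ i, (n i : ℝ)) ^ (-β) :=
    Real.rpow_le_rpow_of_nonpos (by positivity) (by linarith) (by linarith)
  rw [phiFun_birth_sub hβ hn j]
  by_cases hj : n j = 1
  · have htail : rpowTail β (∑ i, (n i : ℝ)) ≤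
        (∑ i, (n i : ℝ)) ^ (-β) * (∑ i, (n i : ℝ)) / (β - 1) := by
      rw [← Real.rpow_add_one (by positivity), show -β + 1 = 1 - β by ring]
      exact rpowTail_le hβ (by positivity)
    rw [phiFun_death_of_eq_one hj, phiFun_of_one_le hn, if_neg (not_not.2 hj), if_pos hj, hj]
    have hbirth := mul_le_mul_of_nonneg_right hmono hb
    have hdeath := mul_le_mul_of_nonneg_right htail hdth
    push_cast
    linear_combination hbirth + hdeath
  · rw [phiFun_death_sub_of_ne_one hβ hn hj, if_pos hj, if_neg hj]
    have hbirth := mul_le_mul_of_nonneg_right hmono (mul_nonneg (Nat.cast_nonneg (n j)) hb)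
    linear_combination hbirth

theorem drift_sum_le_bdGen7_phiFun (hβ : 1 < β) (hn : ∀ i, 1 ≤ n i) (hb : ∀ i, 0 ≤ b n i)
    (hdth : ∀ i, 0 ≤ dth n i) :
    (∑ i, (n i : ℝ)) ^ (-β) * (∑ i, (n i : ℝ) * ((if n i ≠ 1 then dth n i else 0) - b n i) -
        (∑ i, (n i : ℝ)) * (∑ i, if n i = 1 then dth n i else 0) / (β - 1)) ≤
      bdGen7 b dth (phiFun β) n := by
  rw [mul_sum, sum_div, ← sum_sub_distrib, mul_sum, bdGen7, ← sum_add_distrib]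
  exact sum_le_sum fun j _ => drift_term_le hβ hn j (hb j) (hdth j)

theorem dund7_dbar7_drift_le_bdGen7_phiFun (hβ : 1 < β) (hn : ∀ i, 1 ≤ n i) (hb : ∀ i, 0 ≤ b n i)
    (hdth : ∀ i, 0 ≤ dth n i) :
    (∑ i, (n i : ℝ)) ^ (-β) * (dund7 b dth (∑ i, n i) - dbar7 dth (∑ i, n i) / (β - 1)) ≤
      bdGen7 b dth (phiFun β) n := by
  refine le_trans ?_ (drift_sum_le_bdGen7_phiFun hβ hn hb hdth)
  have : 0 < β - 1 := by linarith
  gcongr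
  exacts [dund7_le b dth hn, le_dbar7 dth hn]

end drift

theorem stmt7_general (d : ℕ)
    (b dth : (Fin d → ℕ) → Fin d → ℝ)
    (hb : ∀ n i, 0 ≤ b n i) (hdth : ∀ n i, 0 ≤ dth n i) :
    (∀ β : ℝ, 1 < β → ∀ n : Fin d → ℕ, (∀ i, 1 ≤ n i) →
      (∑ i, (n i : ℝ)) ^ (-β) *
          (dund7 b dth (∑ i, n i) - dbar7 dth (∑ i, n i) / (β - 1)) ≤
        bdGen7 b dth (phiFun β) n) ∧
    ((∃ η > (0:ℝ), ∃ K : ℕ, ∀ k ≥ K, η * dbar7 dth k ≤ dund7 b dth k) →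
      ∃ β > (1:ℝ), ∃ K : ℕ, ∀ n : Fin d → ℕ, (∀ i, 1 ≤ n i) → K ≤ ∑ i, n i →
        0 ≤ bdGen7 b dth (phiFun β) n) := by
  refine ⟨fun β hβ n hn => dund7_dbar7_drift_le_bdGen7_phiFun hβ hn (hb n) (hdth n), ?_⟩
  rintro ⟨η, hη, K, hK⟩
  refine ⟨1 + η⁻¹, lt_add_of_pos_right 1 (inv_pos.2 hη), K, fun n hn hKn => ?_⟩
  refine (dund7_dbar7_drift_le_bdGen7_phiFun (lt_add_of_pos_right 1 (inv_pos.2 hη)) hn (hb n)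
    (hdth n)).trans' ?_
  rw [add_sub_cancel_left, div_inv_eq_mul, mul_comm _ η]
  exact mul_nonneg (by positivity) (sub_nonneg.2 (hK _ hKn))

/-- Lower drift bound `Lφ(n) ≥ |n|^{-β} [d_(|n|) − d̄(|n|)/(β−1)]`; consequently, if
`d_(k) ≥ η d̄(k)` for all large `k` (some `η > 0`), there is `β > 1` with `Lφ(n) ≥ 0`
for all `n` with `|n|` large enough. -/
theorem stmt7 (d : ℕ) (hd : 2 ≤ d)
    (b dth : (Fin d → ℕ) → Fin d → ℝ)
    (hb : ∀ n i, 0 ≤ b n i) (hdth : ∀ n i, 0 ≤ dth n i) :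
    (∀ β : ℝ, 1 < β → ∀ n : Fin d → ℕ, (∀ i, 1 ≤ n i) →
      (∑ i, (n i : ℝ)) ^ (-β) *
          (dund7 b dth (∑ i, n i) - dbar7 dth (∑ i, n i) / (β - 1)) ≤
        bdGen7 b dth (phiFun β) n) ∧
    ((∃ η > (0:ℝ), ∃ K : ℕ, ∀ k ≥ K, η * dbar7 dth k ≤ dund7 b dth k) →
      ∃ β > (1:ℝ), ∃ K : ℕ, ∀ n : Fin d → ℕ, (∀ i, 1 ≤ n i) → K ≤ ∑ i, n i →
        0 ≤ bdGen7 b dth (phiFun β) n) :=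
  stmt7_general d b dth hb hdth
end

section
/- Let f:[0,∞)→[0,∞) be absolutely continuous with f(t) ≤ f(0) + At − B∫₀ᵗ f(s)^{1+ε} ds for all t, where A,B,ε>0. Set a = (2A/B)^{1/(1+ε)} and let t₀>0 satisfy (2/(εBt₀))^{1/ε} < a. Then there exists u ∈ [0,t₀] with f(u) < a. -/
open Set MeasureTheory Filter

/-!
Suppose `f ≥ a` on `[0, t₀]`. Then `f ^ (1 + ε) ≥ 2A/B` there, so
`f t ≤ f s - (B/2) ∫ₛᵗ f ^ (1 + ε)`: `f` is nonincreasing and a supersolution of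
`f' = -(B/2) f ^ (1 + ε)`. For such `f` the quantity `f ^ (-ε)` grows at rate at least `εB/2`;
without differentiating, this follows from a per-step estimate with quadratic error on a
partition of `[0, t₀]`, letting the mesh go to zero. Hence `f t₀ ^ (-ε) ≥ εBt₀/2`, that is
`f t₀ ≤ (2/(εBt₀)) ^ (1/ε) < a`.
-/

lemma le_of_forall_neg_mul_sq_le_sub {φ : ℝ → ℝ} {a b K : ℝ} (hab : a ≤ b)
    (h : ∀ s t, a ≤ s → s ≤ t → t ≤ b → -(K * (t - s) ^ 2) ≤ φ t - φ s) : φ a ≤ φ b := by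
  have hpartition : ∀ n : ℕ, 0 < n → -(K * (b - a) ^ 2) / n ≤ φ b - φ a := by
    intro n hn
    have hn' : (0 : ℝ) < n := Nat.cast_pos.2 hn
    set δ := (b - a) / n
    set x : ℕ → ℝ := fun k => a + k * δ
    have hδ : 0 ≤ δ := div_nonneg (sub_nonneg.2 hab) hn'.le
    have hxn : x n = b := by simp only [x, δ]; field_simp; ring
    have hstep : ∀ k ∈ Finset.range n, -(K * δ ^ 2) ≤ φ (x (k + 1)) - φ (x k) := by
      intro k hk
      have hk : (k : ℝ) + 1 ≤ n := by exact_mod_cast Finset.mem_range.1 hk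
      have hsucc : x (k + 1) = x k + δ := by simp only [x]; push_cast; ring
      have := h (x k) (x (k + 1)) (le_add_of_nonneg_right (by positivity)) (by linarith)
        (by rw [← hxn]; simp only [x]; push_cast; nlinarith)
      rw [hsucc, add_sub_cancel_left] at this
      rwa [hsucc]
    have hsum := Finset.card_nsmul_le_sum _ _ _ hstep
    rw [Finset.sum_range_sub (fun k => φ (x k)), Finset.card_range, nsmul_eq_mul, hxn] at hsum
    calc -(K * (b - a) ^ 2) / n = n * -(K * δ ^ 2) := by simp only [δ]; field_simp
      _ ≤ φ b - φ (x 0) := hsum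
      _ = φ b - φ a := by simp [x]
  have hlim := tendsto_const_div_atTop_nhds_zero_nat (-(K * (b - a) ^ 2))
  have := le_of_tendsto hlim (eventually_atTop.2 ⟨1, fun n hn => hpartition n hn⟩)
  linarith

lemma div_one_add_mul_le_one_sub_one_add_rpow_neg {ε c : ℝ} (hε : 0 ≤ ε) (hc : 0 ≤ c) :
    ε * c / (1 + (1 + ε) * c) ≤ 1 - (1 + c) ^ (-ε) := by
  have h1c : 0 < 1 + c := by linarith
  have hbern : 1 + (1 + ε) * c ≤ (1 + c) * (1 + c) ^ ε := by
    rw [← Real.rpow_one_add' h1c.le (by linarith)]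
    exact one_add_mul_self_le_rpow_one_add (by linarith) (by linarith)
  have hpos : 0 < 1 + (1 + ε) * c := by positivity
  have hinv : (1 + c) ^ (-ε) ≤ (1 + c) / (1 + (1 + ε) * c) := by
    rw [Real.rpow_neg h1c.le, le_div_iff₀ hpos, inv_mul_le_iff₀ (by positivity)]
    linarith
  calc ε * c / (1 + (1 + ε) * c) = 1 - (1 + c) / (1 + (1 + ε) * c) := by field_simp; ring
    _ ≤ 1 - (1 + c) ^ (-ε) := by linarith

lemma mul_sub_le_rpow_neg_sub_rpow_neg {ε d x y M : ℝ} (hε : 0 ≤ ε) (hd : 0 ≤ d) (hy : 0 < y)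
    (hM : y ^ ε ≤ M) (hxy : y + d * y ^ (1 + ε) ≤ x) :
    ε * d - ε * (1 + ε) * M * d ^ 2 ≤ y ^ (-ε) - x ^ (-ε) := by
  set c := d * y ^ ε
  have hc : 0 ≤ c := by positivity
  have hyc : y * (1 + c) ≤ x := by
    rwa [mul_one_add, mul_left_comm, ← Real.rpow_one_add' hy.le (by linarith)]
  have hx : x ^ (-ε) ≤ y ^ (-ε) * (1 + c) ^ (-ε) := by
    rw [← Real.mul_rpow hy.le (by linarith)]
    exact Real.rpow_le_rpow_of_nonpos (by positivity) hyc (by linarith)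
  have hyε : y ^ (-ε) * y ^ ε = 1 := by rw [← Real.rpow_add hy, neg_add_cancel, Real.rpow_zero]
  have hcM : (1 + ε) * c ≤ (1 + ε) * M * d := by
    nlinarith [mul_le_mul_of_nonneg_left hM hd]
  calc ε * d - ε * (1 + ε) * M * d ^ 2 ≤ ε * d * (1 - (1 + ε) * c) := by
        linarith [mul_le_mul_of_nonneg_left hcM (mul_nonneg hε hd)]
    _ ≤ ε * d / (1 + (1 + ε) * c) := by
        rw [le_div_iff₀ (by positivity)]
        nlinarith [mul_nonneg (mul_nonneg hε hd) (sq_nonneg ((1 + ε) * c))]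
    _ = y ^ (-ε) * (ε * c / (1 + (1 + ε) * c)) := by
        have hnum : y ^ (-ε) * (ε * c) = ε * d := by
          simp only [c]; linear_combination ε * d * hyε
        rw [← mul_div_assoc, hnum]
    _ ≤ y ^ (-ε) * (1 - (1 + c) ^ (-ε)) :=
        mul_le_mul_of_nonneg_left (div_one_add_mul_le_one_sub_one_add_rpow_neg hε hc)
          (by positivity)
    _ ≤ y ^ (-ε) - x ^ (-ε) := by linarith

lemma le_one_div_rpow_one_div_of_le_rpow_neg {ε c x : ℝ} (hε : 0 < ε) (hc : 0 < c) (hx : 0 < x)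
    (h : c ≤ x ^ (-ε)) : x ≤ (1 / c) ^ (1 / ε) := by
  rw [one_div ε, Real.le_rpow_inv_iff_of_pos hx.le (by positivity) hε,
    le_one_div (by positivity) hc]
  rwa [Real.rpow_neg hx.le, inv_eq_one_div] at h

lemma mul_sub_le_intervalIntegral {g : ℝ → ℝ} {s t L : ℝ} (hst : s ≤ t)
    (hg : IntervalIntegrable g volume s t) (hL : ∀ r ∈ Icc s t, L ≤ g r) :
    L * (t - s) ≤ ∫ r in s..t, g r := by
  have := intervalIntegral.integral_mono_on hst intervalIntegrable_const hg hL
  rwa [intervalIntegral.integral_const, smul_eq_mul, mul_comm] at this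

lemma mul_le_rpow_neg_sub_rpow_neg_of_le_sub_integral {f : ℝ → ℝ} {C ε a b : ℝ} (hC : 0 ≤ C)
    (hε : 0 ≤ ε) (hab : a ≤ b) (hpos : ∀ t ∈ Icc a b, 0 < f t)
    (hint : IntervalIntegrable (fun r => f r ^ (1 + ε)) volume a b)
    (h : ∀ s t, a ≤ s → s ≤ t → t ≤ b → f t ≤ f s - C * ∫ r in s..t, f r ^ (1 + ε)) :
    ε * C * (b - a) ≤ f b ^ (-ε) - f a ^ (-ε) := by
  have hint' : ∀ s t, a ≤ s → s ≤ t → t ≤ b →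
      IntervalIntegrable (fun r => f r ^ (1 + ε)) volume s t := fun s t hs hst ht =>
    hint.mono_set (by rw [uIcc_of_le hst, uIcc_of_le hab]; exact Icc_subset_Icc hs ht)
  have hanti : ∀ s t, a ≤ s → s ≤ t → t ≤ b → f t ≤ f s := by
    intro s t hs hst ht
    have := intervalIntegral.integral_nonneg (μ := volume) hst fun r hr =>
      Real.rpow_nonneg (hpos r ⟨hs.trans hr.1, hr.2.trans ht⟩).le (1 + ε)
    linarith [h s t hs hst ht, mul_nonneg hC this]
  have hstep : ∀ s t, a ≤ s → s ≤ t → t ≤ b → f t + C * (t - s) * f t ^ (1 + ε) ≤ f s := by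
    intro s t hs hst ht
    have := mul_sub_le_intervalIntegral hst (hint' s t hs hst ht) fun r hr =>
      Real.rpow_le_rpow (hpos t ⟨hs.trans hst, ht⟩).le (hanti r t (hs.trans hr.1) hr.2 ht)
        (by linarith)
    linarith [h s t hs hst ht, mul_le_mul_of_nonneg_left this hC]
  suffices hφ : f a ^ (-ε) - ε * C * a ≤ f b ^ (-ε) - ε * C * b by linarith
  refine le_of_forall_neg_mul_sq_le_sub (φ := fun t => f t ^ (-ε) - ε * C * t)
    (K := ε * (1 + ε) * f a ^ ε * C ^ 2) hab fun s t hs hst ht => ?_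
  have hft : 0 < f t := hpos t ⟨hs.trans hst, ht⟩
  have := mul_sub_le_rpow_neg_sub_rpow_neg hε (mul_nonneg hC (sub_nonneg.2 hst)) hft
    (Real.rpow_le_rpow hft.le (hanti a t le_rfl (hs.trans hst) ht) hε) (hstep s t hs hst ht)
  linarith

theorem stmt10_general (A B ε : ℝ) (hA : 0 < A) (hB : 0 < B) (hε : 0 < ε)
    (f : ℝ → ℝ)
    (hf_cont : ContinuousOn f (Ici (0:ℝ)))
    (hineq : ∀ s t : ℝ, 0 ≤ s → s ≤ t →
      f t ≤ f s + A * (t - s) - B * ∫ r in s..t, f r ^ (1 + ε))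
    (t₀ : ℝ) (ht₀ : 0 < t₀)
    (ht₀' : (2 / (ε * B * t₀)) ^ (1 / ε) < (2 * A / B) ^ (1 / (1 + ε))) :
    ∃ u ∈ Icc (0:ℝ) t₀, f u < (2 * A / B) ^ (1 / (1 + ε)) := by
  by_contra! hge
  set a := (2 * A / B) ^ (1 / (1 + ε))
  have ha : 0 < a := by positivity
  have ha_pow : a ^ (1 + ε) = 2 * A / B := by
    rw [← Real.rpow_mul (by positivity), one_div_mul_cancel (by positivity), Real.rpow_one]
  have hint : IntervalIntegrable (fun r => f r ^ (1 + ε)) volume 0 t₀ :=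
    ((hf_cont.mono Icc_subset_Ici_self).rpow_const fun _ _ => Or.inr (by positivity)
      ).intervalIntegrable_of_Icc ht₀.le
  -- On `[0, t₀]` we have `f ^ (1 + ε) ≥ 2A/B`, so half of the dissipation absorbs the source term.
  have hdiss : ∀ s t, 0 ≤ s → s ≤ t → t ≤ t₀ →
      f t ≤ f s - B / 2 * ∫ r in s..t, f r ^ (1 + ε) := by
    intro s t hs hst ht
    have hsub : IntervalIntegrable (fun r => f r ^ (1 + ε)) volume s t :=
      hint.mono_set (by rw [uIcc_of_le hst, uIcc_of_le ht₀.le]; exact Icc_subset_Icc hs ht)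
    have hlow := mul_sub_le_intervalIntegral hst hsub fun r hr =>
      ha_pow ▸ Real.rpow_le_rpow ha.le (hge r ⟨hs.trans hr.1, hr.2.trans ht⟩) (by positivity)
    have hsrc := mul_le_mul_of_nonneg_left hlow (by positivity : 0 ≤ B / 2)
    rw [← mul_assoc, show B / 2 * (2 * A / B) = A by field_simp] at hsrc
    linarith [hineq s t hs hst]
  have hgain := mul_le_rpow_neg_sub_rpow_neg_of_le_sub_integral (by positivity) hε.le ht₀.le
    (fun t ht => ha.trans_le (hge t ht)) hint hdiss
  have hle := le_one_div_rpow_one_div_of_le_rpow_neg hε (by positivity : 0 < ε * B * t₀ / 2)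
    (ha.trans_le (hge t₀ ⟨ht₀.le, le_rfl⟩)) (by
      linarith [Real.rpow_nonneg (ha.trans_le (hge 0 ⟨le_rfl, ht₀.le⟩)).le (-ε)])
  rw [one_div_div] at hle
  exact (hle.trans_lt ht₀').not_ge (hge t₀ ⟨ht₀.le, le_rfl⟩)

/-- Key quantitative step: if a nonnegative absolutely continuous `f` satisfies
`f(t) ≤ f(s) + A(t−s) − B∫ₛᵗ f^{1+ε}` and `t₀` satisfies `(2/(εBt₀))^{1/ε} < (2A/B)^{1/(1+ε)}`,
then `f(u) < (2A/B)^{1/(1+ε)}` for some `u ∈ [0,t₀]`. -/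
theorem stmt10 (A B ε : ℝ) (hA : 0 < A) (hB : 0 < B) (hε : 0 < ε)
    (f : ℝ → ℝ)
    (hf_nonneg : ∀ t ≥ (0:ℝ), 0 ≤ f t)
    (hf_cont : ContinuousOn f (Ici (0:ℝ)))
    (hineq : ∀ s t : ℝ, 0 ≤ s → s ≤ t →
      f t ≤ f s + A * (t - s) - B * ∫ r in s..t, f r ^ (1 + ε))
    (t₀ : ℝ) (ht₀ : 0 < t₀)
    (ht₀' : (2 / (ε * B * t₀)) ^ (1 / ε) < (2 * A / B) ^ (1 / (1 + ε))) :
    ∃ u ∈ Icc (0:ℝ) t₀, f u < (2 * A / B) ^ (1 / (1 + ε)) :=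
  stmt10_general A B ε hA hB hε f hf_cont hineq t₀ ht₀ ht₀'
end

section
/- Let M>0 and for β≥M define C_β = [−2^{−β} + β2^{−β}(a/B−1) − β(β+1)2^{−β−1}(a/B−1)² + 1]/(a−B)⁴ where 0<a<B. Then there exists M>0 such that C_β > 0 for all β ≥ M, and for such β the polynomial P₂(x) = 2^{−β} − (β2^{−β}/B)(x−B) + (β(β+1)2^{−β−1}/B²)(x−B)² + C_β(x−B)⁴ satisfies P₂'(x) ≤ 0 and P₂''(x) ≥ 0 for all x ≤ B, P₂(a)=1, and P₂(x) ≥ 1 for all x ≤ a. -/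
/-!
The numerator of `C_β` is `1` plus terms `β^k 2^{-β}` with `k ≤ 2`, so `C_β → (a - B)^{-4} > 0`.
Once `C_β > 0` and `β ≥ 0`, each term of `P₂'` is nonpositive on `x ≤ B` and each term of `P₂''` is
nonnegative. The constant `C_β` is chosen precisely so that `P₂(a) = 1`, and since `P₂` decreases on
`(-∞, B]`, it stays `≥ 1` on `(-∞, a]`.
-/

/-- The constant `C_β` in the construction of the Lyapunov function `h_β`. -/
noncomputable def Cbeta (a B β : ℝ) : ℝ :=
  (-(2:ℝ) ^ (-β) + β * (2:ℝ) ^ (-β) * (a / B - 1) -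
      β * (β + 1) * (2:ℝ) ^ (-β - 1) * (a / B - 1) ^ 2 + 1) / (a - B) ^ 4

/-- The quartic polynomial `P₂` matching `B^β(2x)^{−β}` to second order at `x = B`. -/
noncomputable def P2 (a B β x : ℝ) : ℝ :=
  (2:ℝ) ^ (-β) - (β * (2:ℝ) ^ (-β) / B) * (x - B) +
    (β * (β + 1) * (2:ℝ) ^ (-β - 1) / B ^ 2) * (x - B) ^ 2 + Cbeta a B β * (x - B) ^ 4

open Real Filter Set Topology

lemma tendsto_pow_mul_two_rpow_neg_atTop (n : ℕ) :
    Tendsto (fun β : ℝ => β ^ n * (2:ℝ) ^ (-β)) atTop (𝓝 0) := by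
  refine (tendsto_rpow_mul_exp_neg_mul_atTop_nhds_zero n (log 2) (log_pos one_lt_two)).congr' ?_
  filter_upwards [eventually_ge_atTop 0] with β hβ
  rw [rpow_natCast, rpow_def_of_pos two_pos]
  ring_nf

lemma tendsto_Cbeta_atTop (a B : ℝ) : Tendsto (Cbeta a B) atTop (𝓝 ((a - B) ^ 4)⁻¹) := by
  set t := a / B - 1
  have h0 := tendsto_pow_mul_two_rpow_neg_atTop 0
  have h1 := tendsto_pow_mul_two_rpow_neg_atTop 1
  have h2 := tendsto_pow_mul_two_rpow_neg_atTop 2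
  have hnum := (((h0.neg.add (h1.const_mul t)).sub
    ((h2.add h1).const_mul (t ^ 2 / 2))).add_const 1).div_const ((a - B) ^ 4)
  rw [← one_div]
  convert hnum using 2 with β
  · unfold Cbeta
    rw [rpow_sub_one two_ne_zero]
    ring
  · norm_num

variable {a B β x : ℝ}

lemma eventually_Cbeta_pos (h : a ≠ B) : ∀ᶠ β in atTop, 0 < Cbeta a B β :=
  (tendsto_Cbeta_atTop a B).eventually
    (eventually_gt_nhds (inv_pos.2 (Even.pow_pos (by decide) (sub_ne_zero.2 h))))

lemma hasDerivAt_P2 (a B β x : ℝ) :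
    HasDerivAt (P2 a B β)
      (-(β * 2 ^ (-β) / B) + 2 * (β * (β + 1) * 2 ^ (-β - 1) / B ^ 2) * (x - B) +
        4 * Cbeta a B β * (x - B) ^ 3) x := by
  have h := (hasDerivAt_id' x).sub_const B
  refine ((((hasDerivAt_const x (2 ^ (-β) : ℝ)).sub (h.const_mul (β * 2 ^ (-β) / B))).add
    ((h.pow 2).const_mul (β * (β + 1) * 2 ^ (-β - 1) / B ^ 2))).add
    ((h.pow 4).const_mul (Cbeta a B β))).congr_deriv ?_
  push_cast
  ring

lemma deriv_P2 (a B β : ℝ) :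
    deriv (P2 a B β) = fun x => -(β * 2 ^ (-β) / B) +
      2 * (β * (β + 1) * 2 ^ (-β - 1) / B ^ 2) * (x - B) + 4 * Cbeta a B β * (x - B) ^ 3 :=
  funext fun x => (hasDerivAt_P2 a B β x).deriv

lemma deriv_deriv_P2 (a B β x : ℝ) :
    deriv (deriv (P2 a B β)) x =
      2 * (β * (β + 1) * 2 ^ (-β - 1) / B ^ 2) + 12 * Cbeta a B β * (x - B) ^ 2 := by
  have h := (hasDerivAt_id' x).sub_const B
  rw [deriv_P2]
  refine ((((hasDerivAt_const x _).add (h.const_mul _)).add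
    ((h.pow 3).const_mul (4 * Cbeta a B β))).congr_deriv ?_).deriv
  push_cast
  ring

lemma deriv_P2_nonpos (hB : 0 < B) (hβ : 0 ≤ β) (hC : 0 ≤ Cbeta a B β) (hx : x ≤ B) :
    deriv (P2 a B β) x ≤ 0 := by
  have hxB : x - B ≤ 0 := sub_nonpos.2 hx
  have hcube : (x - B) ^ 3 ≤ 0 := Odd.pow_nonpos (by decide) hxB
  rw [deriv_P2]
  have : 0 ≤ β * 2 ^ (-β) / B := by positivity
  have : 0 ≤ β * (β + 1) * 2 ^ (-β - 1) / B ^ 2 := by positivity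
  nlinarith

lemma deriv_deriv_P2_nonneg (hβ : 0 ≤ β) (hC : 0 ≤ Cbeta a B β) (x : ℝ) :
    0 ≤ deriv (deriv (P2 a B β)) x := by
  rw [deriv_deriv_P2]
  positivity

lemma P2_self (hB : B ≠ 0) (h : a ≠ B) (β : ℝ) : P2 a B β a = 1 := by
  have : (a - B) ^ 4 ≠ 0 := pow_ne_zero _ (sub_ne_zero.2 h)
  unfold P2 Cbeta
  field_simp
  ring

lemma antitoneOn_P2 (hB : 0 < B) (hβ : 0 ≤ β) (hC : 0 ≤ Cbeta a B β) :
    AntitoneOn (P2 a B β) (Iic B) :=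
  antitoneOn_of_hasDerivWithinAt_nonpos (convex_Iic B)
    (fun y _ => (hasDerivAt_P2 a B β y).continuousAt.continuousWithinAt)
    (fun y _ => (hasDerivAt_P2 a B β y).hasDerivWithinAt)
    (fun y hy => by
      simpa only [deriv_P2] using deriv_P2_nonpos hB hβ hC (interior_subset (s := Iic B) hy))

/-- Core computation of Lemma 4.3: for `β` large, `C_β > 0`, `P₂` is nonincreasing and convex
on `(-∞, B]`, `P₂(a) = 1`, and `P₂ ≥ 1` on `(-∞, a]`. -/
theorem stmt13 (a B : ℝ) (ha : 0 < a) (hab : a < B) :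
    ∃ M > (0:ℝ), ∀ β ≥ M,
      0 < Cbeta a B β ∧
      (∀ x ≤ B, deriv (P2 a B β) x ≤ 0 ∧ 0 ≤ deriv (deriv (P2 a B β)) x) ∧
      P2 a B β a = 1 ∧
      ∀ x ≤ a, 1 ≤ P2 a B β x := by
  have hB : 0 < B := ha.trans hab
  obtain ⟨M, hM1, hM⟩ := (atTop_basis' 1).eventually_iff.mp (eventually_Cbeta_pos hab.ne)
  refine ⟨M, one_pos.trans_le hM1, fun β hβM => ?_⟩
  have hβ : 0 ≤ β := zero_le_one.trans (hM1.trans hβM)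
  have hC : 0 < Cbeta a B β := hM hβM
  have hPa : P2 a B β a = 1 := P2_self hB.ne' hab.ne β
  refine ⟨hC, fun x hx => ⟨deriv_P2_nonpos hB hβ hC.le hx, deriv_deriv_P2_nonneg hβ hC.le x⟩,
    hPa, fun x hx => ?_⟩
  rw [← hPa]
  exact antitoneOn_P2 hB hβ hC.le (hx.trans hab.le) hab.le hx
end

section
/- There exists M>0 such that for all β ≥ M there is a function h_β:[0,∞)→[0,∞), twice continuously differentiable on (0,∞), with h_β(x)=4x²/a² for x∈[0,a/2], h_β(x)=B^β(2x)^{−β} for x≥B, h_β ≥ 1 on [a/2,a], h_β nonincreasing and convex on [a,∞), and sup_{β≥M} sup_{x∈[a/2,a]}|h_β'(x)| < ∞, sup_{β≥M} sup_{x∈[a/2,a]}|h_β''(x)| < ∞. -/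
/-!
On `[0, a/2]` take the parabola `4x²/a²`; on `[a, B]` take the polynomial `bridge`: the
second-order Taylor polynomial of `T(x) = B^β (2x)^{-β}` at `B`, whose coefficients in powers of
`B - x` are all nonnegative, plus the cubic `((B - x)/(B - a))³`, which lifts it above `1` on
`(-∞, a]`. Both are `≥ 1` on `[a/2, a]`, so blending them there with a smooth transition keeps
the bound, and gluing the blend to `T` at `B`, where the 2-jets agree, gives a `C²` function.
Nonnegativity of the Taylor coefficients makes it decreasing and convex on `[a, ∞)`. Finally `β`
enters the blend only through the coefficients `β^k 2^{-β}`, `k ≤ 2`, which are bounded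
uniformly in `β ≥ 0`; this gives the uniform derivative bounds on `[a/2, a]`.
-/

open Set Filter Topology

section Piecewise

variable {f g : ℝ → ℝ} {s : Set ℝ} {j : ℝ}

theorem hasDerivAt_piecewise_Iic (hs : IsOpen s) (hf : DifferentiableOn ℝ f s)
    (hg : DifferentiableOn ℝ g s) (h₀ : f j = g j) (h₁ : deriv f j = deriv g j) {x : ℝ}
    (hx : x ∈ s) :
    HasDerivAt ((Iic j).piecewise f g) ((Iic j).piecewise (deriv f) (deriv g) x) x := by
  have hfx := (hf.differentiableAt (hs.mem_nhds hx)).hasDerivAt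
  have hgx := (hg.differentiableAt (hs.mem_nhds hx)).hasDerivAt
  have hleft : EqOn ((Iic j).piecewise f g) f (Iic j) := piecewise_eqOn _ _ _
  have hright : EqOn ((Iic j).piecewise f g) g (Ici j) := fun y (hy : j ≤ y) => by
    rcases hy.eq_or_lt with rfl | hy
    · simp [h₀]
    · simp [piecewise, not_le.mpr hy]
  rcases lt_trichotomy x j with hxj | hxj | hxj
  · rw [piecewise_eq_of_mem (Iic j) (deriv f) (deriv g) hxj.le]
    exact (hfx.hasDerivWithinAt.congr hleft (hleft hxj.le)).hasDerivAt (Iic_mem_nhds hxj)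
  · subst hxj
    rw [piecewise_eq_of_mem (Iic x) (deriv f) (deriv g) self_mem_Iic, ← hasDerivWithinAt_univ,
      ← Iic_union_Ici]
    exact (hfx.hasDerivWithinAt.congr hleft (hleft self_mem_Iic)).union
      (h₁ ▸ hgx.hasDerivWithinAt.congr hright (hright self_mem_Ici))
  · rw [piecewise_eq_of_notMem (Iic j) (deriv f) (deriv g) (not_le.mpr hxj)]
    exact (hgx.hasDerivWithinAt.congr hright (hright hxj.le)).hasDerivAt (Ici_mem_nhds hxj)

theorem contDiffOn_piecewise_Iic (hs : IsOpen s) :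
    ∀ {n : ℕ} {f g : ℝ → ℝ}, ContDiffOn ℝ n f s → ContDiffOn ℝ n g s →
      (∀ k ≤ n, iteratedDeriv k f j = iteratedDeriv k g j) →
      ContDiffOn ℝ n ((Iic j).piecewise f g) s
  | 0, f, g, hf, hg, hfg => by
    rw [Nat.cast_zero, contDiffOn_zero] at hf hg ⊢
    refine ContinuousOn.piecewise (fun x hx => ?_) (hf.mono inter_subset_left)
      (hg.mono inter_subset_left)
    obtain rfl : x = j := by simpa using hx.2
    simpa using hfg 0 le_rfl
  | n + 1, f, g, hf, hg, hfg => by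
    have hd := fun {x} (hx : x ∈ s) => hasDerivAt_piecewise_Iic hs
      (hf.differentiableOn (by simp)) (hg.differentiableOn (by simp))
      (by simpa using hfg 0 (by omega)) (by simpa using hfg 1 (by omega)) hx
    rw [Nat.cast_add, Nat.cast_one, contDiffOn_succ_iff_deriv_of_isOpen hs]
    refine ⟨fun x hx => (hd hx).differentiableAt.differentiableWithinAt, by simp, ?_⟩
    refine (contDiffOn_piecewise_Iic hs (hf.deriv_of_isOpen hs le_rfl)
      (hg.deriv_of_isOpen hs le_rfl) fun k hk => ?_).congr fun x hx => (hd hx).deriv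
    simpa [← iteratedDeriv_succ'] using hfg (k + 1) (by omega)

theorem eqOn_iteratedDeriv_piecewise_Iic (hs : IsOpen s) :
    ∀ {n : ℕ} {f g : ℝ → ℝ}, ContDiffOn ℝ n f s → ContDiffOn ℝ n g s →
      (∀ k ≤ n, iteratedDeriv k f j = iteratedDeriv k g j) →
      EqOn (iteratedDeriv n ((Iic j).piecewise f g))
        ((Iic j).piecewise (iteratedDeriv n f) (iteratedDeriv n g)) s
  | 0, f, g, _, _, _ => by simp [EqOn]
  | n + 1, f, g, hf, hg, hfg => by
    have hd : EqOn (deriv ((Iic j).piecewise f g)) ((Iic j).piecewise (deriv f) (deriv g)) s :=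
      fun x hx => (hasDerivAt_piecewise_Iic hs
        (hf.differentiableOn (by simp)) (hg.differentiableOn (by simp))
        (by simpa using hfg 0 (by omega)) (by simpa using hfg 1 (by omega)) hx).deriv
    simp only [iteratedDeriv_succ']
    exact (hd.iteratedDeriv_of_isOpen hs n).trans (eqOn_iteratedDeriv_piecewise_Iic hs
      (hf.deriv_of_isOpen hs le_rfl) (hg.deriv_of_isOpen hs le_rfl) fun k hk => by
        simpa [← iteratedDeriv_succ'] using hfg (k + 1) (by omega))

end Piecewise

theorem exists_bound_iteratedDeriv_sum_mul {ι : Type*} [Fintype ι] {n : ℕ}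
    {g : ι → ℝ → ℝ} (hg : ∀ i, ContDiff ℝ n (g i)) {K : Set ℝ} (hK : IsCompact K) (C : ℝ) :
    ∃ M, ∀ c : ι → ℝ, (∀ i, |c i| ≤ C) → ∀ x ∈ K,
      |iteratedDeriv n (fun y => ∑ i, c i * g i y) x| ≤ M := by
  choose M hM using fun i => hK.exists_bound_of_continuousOn
    ((hg i).continuous_iteratedDeriv' n).continuousOn
  refine ⟨∑ i, C * M i, fun c hc x hx => ?_⟩
  rw [iteratedDeriv_fun_sum fun i _ => (contDiffAt_const.mul (hg i).contDiffAt)]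
  refine (Finset.abs_sum_le_sum_abs _ _).trans (Finset.sum_le_sum fun i _ => ?_)
  rw [iteratedDeriv_const_mul_field, abs_mul]
  exact mul_le_mul (hc i) (hM i x hx) (abs_nonneg _) ((abs_nonneg _).trans (hc i))

theorem pow_mul_rpow_neg_le {b : ℝ} (hb : 1 < b) (k : ℕ) {β : ℝ} (hβ : 0 ≤ β) :
    β ^ k * b ^ (-β) ≤ k.factorial / Real.log b ^ k := by
  have hlog := Real.log_pos hb
  have h := Real.pow_div_factorial_le_exp (β * Real.log b) (by positivity) k
  rw [mul_comm, ← Real.rpow_def_of_pos (by linarith), mul_pow, div_le_iff₀ (by positivity)] at h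
  rw [Real.rpow_neg (by linarith), ← div_eq_mul_inv,
    div_le_div_iff₀ (by positivity) (by positivity)]
  linarith

noncomputable section

def powTail (B β x : ℝ) : ℝ := B ^ β * (2 * x) ^ (-β)

section PowTail

variable {B β x : ℝ}

theorem powTail_pos (hB : 0 < B) (hx : 0 < x) : 0 < powTail B β x := by
  unfold powTail; positivity

theorem powTail_self (hB : 0 < B) : powTail B β B = 2 ^ (-β) := by
  rw [powTail, Real.mul_rpow zero_le_two hB.le, mul_left_comm, ← Real.rpow_add hB]
  simp

theorem hasDerivAt_powTail (hx : 0 < x) :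
    HasDerivAt (powTail B β) (-β * powTail B β x / x) x := by
  have h2 : HasDerivAt (fun y : ℝ => 2 * y) 2 x := by
    simpa using (hasDerivAt_id x).const_mul (2 : ℝ)
  refine (((Real.hasDerivAt_rpow_const (p := -β) (Or.inl (by positivity))).comp x h2).const_mul
    (B ^ β)).congr_deriv ?_
  rw [powTail, Real.rpow_sub_one (by positivity)]
  field_simp

theorem contDiffOn_powTail {n : WithTop ℕ∞} :
    ContDiffOn ℝ n (powTail B β) (Ioi 0) := fun x hx =>
  (contDiffAt_const.mul ((contDiffAt_const.mul contDiffAt_id).rpow_const_of_ne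
    (by simp [(mem_Ioi.mp hx).ne']))).contDiffWithinAt

theorem iteratedDeriv_one_powTail (hx : 0 < x) :
    iteratedDeriv 1 (powTail B β) x = -β * powTail B β x / x := by
  rw [iteratedDeriv_one, (hasDerivAt_powTail hx).deriv]

theorem iteratedDeriv_two_powTail (hx : 0 < x) :
    iteratedDeriv 2 (powTail B β) x = β * (β + 1) * powTail B β x / x ^ 2 := by
  have hev : deriv (powTail B β) =ᶠ[𝓝 x] fun y => -β * powTail B β y / y :=
    eventually_of_mem (Ioi_mem_nhds hx) fun y hy => (hasDerivAt_powTail hy).deriv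
  rw [iteratedDeriv_succ, iteratedDeriv_one, hev.deriv_eq,
    (((hasDerivAt_powTail hx).const_mul (-β)).fun_div (hasDerivAt_id' x) hx.ne').deriv]
  field_simp
  ring

end PowTail

def bridge (a B β x : ℝ) : ℝ :=
  powTail B β B * (1 + β * (B - x) / B + β * (β + 1) * (B - x) ^ 2 / (2 * B ^ 2)) +
    (B - x) ^ 3 / (B - a) ^ 3

section Bridge

variable {a B β x : ℝ}

theorem contDiff_bridge {n : WithTop ℕ∞} : ContDiff ℝ n (bridge a B β) := by
  unfold bridge; fun_prop

theorem deriv_bridge : deriv (bridge a B β) = fun x =>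
    -(powTail B β B * (β / B + β * (β + 1) * (B - x) / B ^ 2) +
      3 * (B - x) ^ 2 / (B - a) ^ 3) := by
  funext x
  have ht : HasDerivAt (fun y => B - y) (-1) x := (hasDerivAt_id' x).const_sub B
  refine HasDerivAt.deriv ?_
  have := ((((ht.const_mul β).div_const B).const_add 1).add
    (((ht.pow 2).const_mul (β * (β + 1))).div_const (2 * B ^ 2))).const_mul (powTail B β B)
    |>.add ((ht.pow 3).div_const ((B - a) ^ 3))
  exact this.congr_deriv (by push_cast; ring)

theorem deriv_deriv_bridge : deriv (deriv (bridge a B β)) = fun x =>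
    powTail B β B * (β * (β + 1) / B ^ 2) + 6 * (B - x) / (B - a) ^ 3 := by
  funext x
  have ht : HasDerivAt (fun y => B - y) (-1) x := (hasDerivAt_id' x).const_sub B
  rw [deriv_bridge]
  refine HasDerivAt.deriv ?_
  have := ((((ht.const_mul (β * (β + 1))).div_const (B ^ 2)).const_add (β / B)).const_mul
    (powTail B β B) |>.add (((ht.pow 2).const_mul 3).div_const ((B - a) ^ 3))).neg
  exact this.congr_deriv (by push_cast; ring)

theorem iteratedDeriv_bridge_self_eq_powTail (hB : 0 < B) {k : ℕ} (hk : k ≤ 2) :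
    iteratedDeriv k (bridge a B β) B = iteratedDeriv k (powTail B β) B := by
  interval_cases k
  · simp [bridge]
  · rw [iteratedDeriv_one_powTail hB, iteratedDeriv_one, deriv_bridge]
    field_simp
    ring
  · rw [iteratedDeriv_two_powTail hB, iteratedDeriv_succ, iteratedDeriv_one, deriv_deriv_bridge]
    field_simp
    ring

theorem bridge_nonneg (hβ : 0 ≤ β) (hab : a < B) (hB : 0 < B) (hx : x ≤ B) :
    0 ≤ bridge a B β x := by
  have := (powTail_pos (β := β) hB hB).le
  have : 0 ≤ B - x := by linarith
  have : 0 < B - a := by linarith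
  unfold bridge
  positivity

theorem one_le_bridge (hβ : 0 ≤ β) (hab : a < B) (hB : 0 < B) (hx : x ≤ a) :
    1 ≤ bridge a B β x := by
  have := (powTail_pos (β := β) hB hB).le
  have : 0 ≤ B - x := by linarith
  have hcube : 1 ≤ (B - x) ^ 3 / (B - a) ^ 3 := by
    rw [one_le_div (by linarith [pow_pos (sub_pos.mpr hab) 3])]
    exact pow_le_pow_left₀ (by linarith) (by linarith) 3
  unfold bridge
  linarith [show 0 ≤ powTail B β B *
    (1 + β * (B - x) / B + β * (β + 1) * (B - x) ^ 2 / (2 * B ^ 2)) by positivity]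

theorem deriv_bridge_nonpos (hβ : 0 ≤ β) (hab : a < B) (hB : 0 < B) (hx : x ≤ B) :
    deriv (bridge a B β) x ≤ 0 := by
  have := (powTail_pos (β := β) hB hB).le
  have : 0 ≤ B - x := by linarith
  have : 0 < B - a := by linarith
  rw [deriv_bridge, neg_nonpos]
  positivity

theorem deriv_deriv_bridge_nonneg (hβ : 0 ≤ β) (hab : a < B) (hB : 0 < B) (hx : x ≤ B) :
    0 ≤ deriv (deriv (bridge a B β)) x := by
  have := (powTail_pos (β := β) hB hB).le
  have : 0 ≤ B - x := by linarith
  have : 0 < B - a := by linarith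
  rw [deriv_deriv_bridge]
  positivity

end Bridge

def blend (a x : ℝ) : ℝ := Real.smoothTransition (2 * x / a - 1)

def blended (a B β x : ℝ) : ℝ :=
  4 * x ^ 2 / a ^ 2 + blend a x * (bridge a B β x - 4 * x ^ 2 / a ^ 2)

def blendedCoeff (β : ℝ) : Fin 4 → ℝ := ![1, 2 ^ (-β), β * 2 ^ (-β), β ^ 2 * 2 ^ (-β)]

def blendedBasis (a B : ℝ) : Fin 4 → ℝ → ℝ :=
  ![fun y => 4 * y ^ 2 / a ^ 2 + blend a y * ((B - y) ^ 3 / (B - a) ^ 3 - 4 * y ^ 2 / a ^ 2),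
    blend a, fun y => blend a y * ((B - y) / B + (B - y) ^ 2 / (2 * B ^ 2)),
    fun y => blend a y * ((B - y) ^ 2 / (2 * B ^ 2))]

section Blend

variable {a B β x : ℝ}

theorem blend_of_le (ha : 0 < a) (hx : x ≤ a / 2) : blend a x = 0 :=
  Real.smoothTransition.zero_of_nonpos (by rw [sub_nonpos, div_le_one ha]; linarith)

theorem blend_of_ge (ha : 0 < a) (hx : a ≤ x) : blend a x = 1 :=
  Real.smoothTransition.one_of_one_le (by rw [le_sub_iff_add_le, le_div_iff₀ ha]; linarith)

theorem contDiff_blend {n : ℕ∞} : ContDiff ℝ n (blend a) :=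
  Real.smoothTransition.contDiff.comp (by fun_prop)

theorem contDiff_blended {n : ℕ∞} : ContDiff ℝ n (blended a B β) := by
  have := contDiff_blend (n := n) (a := a)
  have := contDiff_bridge (n := n) (a := a) (B := B) (β := β)
  unfold blended
  fun_prop

theorem blended_of_le (ha : 0 < a) (hx : x ≤ a / 2) : blended a B β x = 4 * x ^ 2 / a ^ 2 := by
  simp [blended, blend_of_le ha hx]

theorem blended_eventuallyEq_bridge (ha : 0 < a) (hx : a < x) :
    blended a B β =ᶠ[𝓝 x] bridge a B β :=
  eventually_of_mem (Ioi_mem_nhds hx) fun y hy => by simp [blended, blend_of_ge ha (le_of_lt hy)]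

theorem le_blended {c : ℝ} (hparab : c ≤ 4 * x ^ 2 / a ^ 2) (hbridge : c ≤ bridge a B β x) :
    c ≤ blended a B β x := by
  have h₀ := Real.smoothTransition.nonneg (2 * x / a - 1)
  have h₁ := Real.smoothTransition.le_one (2 * x / a - 1)
  unfold blended blend
  nlinarith

theorem blended_eq_sum (hB : 0 < B) :
    blended a B β = fun y => ∑ i, blendedCoeff β i * blendedBasis a B i y := by
  funext y
  simp only [Fin.sum_univ_four, blended, bridge, powTail_self hB, blendedCoeff, blendedBasis,
    Matrix.cons_val]
  ring

theorem contDiff_blendedBasis {n : ℕ∞} (i : Fin 4) : ContDiff ℝ n (blendedBasis a B i) := by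
  have := contDiff_blend (n := n) (a := a)
  fin_cases i <;> simp [blendedBasis] <;> fun_prop

theorem abs_blendedCoeff_le (hβ : 0 ≤ β) (i : Fin 4) :
    |blendedCoeff β i| ≤ 1 + 1 / Real.log 2 + 2 / Real.log 2 ^ 2 := by
  have hlog := Real.log_pos one_lt_two
  have : 0 < (Real.log 2)⁻¹ := by positivity
  have : 0 < 2 / Real.log 2 ^ 2 := by positivity
  have h₀ := pow_mul_rpow_neg_le one_lt_two 0 hβ
  have h₁ := pow_mul_rpow_neg_le one_lt_two 1 hβ
  have h₂ := pow_mul_rpow_neg_le one_lt_two 2 hβ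
  have hpow : |(2 : ℝ) ^ (-β)| = 2 ^ (-β) := abs_of_pos (by positivity)
  fin_cases i <;> simp [blendedCoeff, abs_of_nonneg hβ, hpow] at h₀ h₁ h₂ ⊢ <;> linarith

theorem iteratedDeriv_blended_self_eq_powTail (ha : 0 < a) (hab : a < B) {k : ℕ} (hk : k ≤ 2) :
    iteratedDeriv k (blended a B β) B = iteratedDeriv k (powTail B β) B :=
  ((blended_eventuallyEq_bridge ha hab).iteratedDeriv_eq k).trans
    (iteratedDeriv_bridge_self_eq_powTail (by linarith) hk)

end Blend

def profile (a B β : ℝ) : ℝ → ℝ := (Iic B).piecewise (blended a B β) (powTail B β)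

section Profile

variable {a B β x : ℝ}

theorem profile_of_le (hx : x ≤ B) : profile a B β x = blended a B β x :=
  piecewise_eq_of_mem (Iic B) _ _ hx

theorem profile_of_gt (hx : B < x) : profile a B β x = powTail B β x :=
  piecewise_eq_of_notMem (Iic B) _ _ (not_le.mpr hx)

theorem profile_eventuallyEq_blended (hx : x < B) : profile a B β =ᶠ[𝓝 x] blended a B β :=
  eventually_of_mem (Iic_mem_nhds hx) fun _ hy => profile_of_le hy

theorem contDiffOn_profile (ha : 0 < a) (hab : a < B) :
    ContDiffOn ℝ 2 (profile a B β) (Ioi 0) :=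
  contDiffOn_piecewise_Iic (n := 2) isOpen_Ioi contDiff_blended.contDiffOn contDiffOn_powTail
    fun _ hk => iteratedDeriv_blended_self_eq_powTail ha hab hk

theorem iteratedDeriv_profile (ha : 0 < a) (hab : a < B) {k : ℕ} (hk : k ≤ 2) (hx : 0 < x) :
    iteratedDeriv k (profile a B β) x =
      (Iic B).piecewise (iteratedDeriv k (blended a B β)) (iteratedDeriv k (powTail B β)) x :=
  eqOn_iteratedDeriv_piecewise_Iic isOpen_Ioi contDiff_blended.contDiffOn contDiffOn_powTail
    (fun _ hi => iteratedDeriv_blended_self_eq_powTail ha hab (hi.trans hk)) hx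

theorem iteratedDeriv_one_profile_nonpos (hβ : 0 ≤ β) (ha : 0 < a) (hab : a < B) (hx : a < x) :
    iteratedDeriv 1 (profile a B β) x ≤ 0 := by
  have hB : 0 < B := ha.trans hab
  rw [iteratedDeriv_profile ha hab (by norm_num) (ha.trans hx)]
  by_cases hxB : x ≤ B
  · rw [piecewise_eq_of_mem (Iic B) _ _ hxB,
      (blended_eventuallyEq_bridge ha hx).iteratedDeriv_eq 1, iteratedDeriv_one]
    exact deriv_bridge_nonpos hβ hab hB hxB
  · have hx0 : 0 < x := ha.trans hx
    rw [piecewise_eq_of_notMem (Iic B) _ _ hxB, iteratedDeriv_one_powTail hx0]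
    have := powTail_pos (β := β) hB hx0
    exact div_nonpos_of_nonpos_of_nonneg (by nlinarith) hx0.le

theorem iteratedDeriv_two_profile_nonneg (hβ : 0 ≤ β) (ha : 0 < a) (hab : a < B) (hx : a < x) :
    0 ≤ iteratedDeriv 2 (profile a B β) x := by
  have hB : 0 < B := ha.trans hab
  rw [iteratedDeriv_profile ha hab le_rfl (ha.trans hx)]
  by_cases hxB : x ≤ B
  · rw [piecewise_eq_of_mem (Iic B) _ _ hxB,
      (blended_eventuallyEq_bridge ha hx).iteratedDeriv_eq 2, iteratedDeriv_succ, iteratedDeriv_one]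
    exact deriv_deriv_bridge_nonneg hβ hab hB hxB
  · have hx0 : 0 < x := ha.trans hx
    rw [piecewise_eq_of_notMem (Iic B) _ _ hxB, iteratedDeriv_two_powTail hx0]
    have := powTail_pos (β := β) hB hx0
    positivity

theorem antitoneOn_profile (hβ : 0 ≤ β) (ha : 0 < a) (hab : a < B) :
    AntitoneOn (profile a B β) (Ici a) := by
  have hC := contDiffOn_profile (β := β) ha hab
  refine antitoneOn_of_deriv_nonpos (convex_Ici a) (hC.continuousOn.mono (Ici_subset_Ioi.mpr ha))
    ?_ ?_ <;> rw [interior_Ici]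
  · exact (hC.differentiableOn (by norm_num)).mono (Ioi_subset_Ioi ha.le)
  · intro x hx
    simpa using iteratedDeriv_one_profile_nonpos hβ ha hab hx

theorem convexOn_profile (hβ : 0 ≤ β) (ha : 0 < a) (hab : a < B) :
    ConvexOn ℝ (Ici a) (profile a B β) := by
  have hC := contDiffOn_profile (β := β) ha hab
  have hC' : ContDiffOn ℝ 1 (deriv (profile a B β)) (Ioi 0) :=
    hC.deriv_of_isOpen isOpen_Ioi (by norm_num)
  refine convexOn_of_deriv2_nonneg (convex_Ici a) (hC.continuousOn.mono (Ici_subset_Ioi.mpr ha))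
    ?_ ?_ ?_ <;> rw [interior_Ici]
  · exact (hC.differentiableOn (by norm_num)).mono (Ioi_subset_Ioi ha.le)
  · exact (hC'.differentiableOn one_ne_zero).mono (Ioi_subset_Ioi ha.le)
  · intro x hx
    simpa [iteratedDeriv_eq_iterate] using iteratedDeriv_two_profile_nonneg hβ ha hab hx

theorem profile_nonneg (hβ : 0 ≤ β) (ha : 0 < a) (hab : a < B) :
    0 ≤ profile a B β x := by
  have hB : 0 < B := ha.trans hab
  by_cases hxB : x ≤ B
  · rw [profile_of_le hxB]
    exact le_blended (by positivity) (bridge_nonneg hβ hab hB hxB)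
  · rw [profile_of_gt (not_le.mp hxB)]
    exact (powTail_pos hB (hB.trans (not_le.mp hxB))).le

theorem one_le_profile (hβ : 0 ≤ β) (ha : 0 < a) (hab : a < B) (hx : x ∈ Icc (a / 2) a) :
    1 ≤ profile a B β x := by
  rw [profile_of_le (hx.2.trans hab.le)]
  refine le_blended ?_ (one_le_bridge hβ hab (ha.trans hab) hx.2)
  rw [le_div_iff₀ (by positivity)]
  nlinarith [hx.1]

theorem profile_of_le_half (ha : 0 < a) (hab : a < B) (hx : x ≤ a / 2) :
    profile a B β x = 4 * x ^ 2 / a ^ 2 := by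
  rw [profile_of_le (by linarith), blended_of_le ha hx]

theorem profile_of_ge (ha : 0 < a) (hab : a < B) (hx : B ≤ x) :
    profile a B β x = powTail B β x := by
  rcases hx.eq_or_lt with rfl | hx
  · rw [profile_of_le le_rfl, (blended_eventuallyEq_bridge ha hab).eq_of_nhds]
    simp [bridge]
  · exact profile_of_gt hx

theorem exists_bound_iteratedDeriv_profile (ha : 0 < a) (hab : a < B) (n : ℕ) :
    ∃ M, ∀ β ≥ 0, ∀ x ∈ Icc (a / 2) a, |iteratedDeriv n (profile a B β) x| ≤ M := by
  obtain ⟨M, hM⟩ := exists_bound_iteratedDeriv_sum_mul (n := n)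
    (contDiff_blendedBasis (a := a) (B := B)) isCompact_Icc (1 + 1 / Real.log 2 + 2 / Real.log 2 ^ 2)
  refine ⟨M, fun β hβ x hx => ?_⟩
  rw [(profile_eventuallyEq_blended (hx.2.trans_lt hab)).iteratedDeriv_eq n,
    blended_eq_sum (ha.trans hab)]
  exact hM _ (abs_blendedCoeff_le hβ) x hx

end Profile

end

/-- Lemma 4.3: for all `β` large enough there is `h_β : [0,∞) → [0,∞)`, `C²` on `(0,∞)`, with
`h_β(x) = 4x²/a²` on `[0,a/2]`, `h_β(x) = B^β (2x)^{−β}` for `x ≥ B`, `h_β ≥ 1` on `[a/2,a]`,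
`h_β` nonincreasing and convex on `[a,∞)`, and first and second derivatives uniformly bounded
on `[a/2,a]` over `β`. -/
theorem stmt14 (a B : ℝ) (ha : 0 < a) (hab : a < B) :
    ∃ M > (0:ℝ), ∃ h : ℝ → ℝ → ℝ,
      (∀ β ≥ M,
        (∀ x ≥ (0:ℝ), 0 ≤ h β x) ∧
        ContDiffOn ℝ 2 (h β) (Ioi (0:ℝ)) ∧
        (∀ x ∈ Icc (0:ℝ) (a / 2), h β x = 4 * x ^ 2 / a ^ 2) ∧
        (∀ x ≥ B, h β x = B ^ β * (2 * x) ^ (-β)) ∧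
        (∀ x ∈ Icc (a / 2) a, 1 ≤ h β x) ∧
        AntitoneOn (h β) (Ici a) ∧
        ConvexOn ℝ (Ici a) (h β)) ∧
      ∃ M' M'' : ℝ, ∀ β ≥ M, ∀ x ∈ Icc (a / 2) a,
        |deriv (h β) x| ≤ M' ∧ |deriv (deriv (h β)) x| ≤ M'' := by
  obtain ⟨M', hM'⟩ := exists_bound_iteratedDeriv_profile ha hab 1
  obtain ⟨M'', hM''⟩ := exists_bound_iteratedDeriv_profile ha hab 2
  refine ⟨1, one_pos, profile a B, fun β hβ => ?_, M', M'', fun β hβ x hx => ?_⟩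
  · have hβ₀ : 0 ≤ β := zero_le_one.trans hβ
    exact ⟨fun x _ => profile_nonneg hβ₀ ha hab, contDiffOn_profile ha hab,
      fun x hx => profile_of_le_half ha hab hx.2, fun x hx => profile_of_ge ha hab hx,
      fun x hx => one_le_profile hβ₀ ha hab hx, antitoneOn_profile hβ₀ ha hab,
      convexOn_profile hβ₀ ha hab⟩
  · have hβ₀ : 0 ≤ β := zero_le_one.trans hβ
    simpa [iteratedDeriv_succ] using And.intro (hM' β hβ₀ x hx) (hM'' β hβ₀ x hx)
end

section
/- Let g be C² on (0,∞), increasing concave, with g(x)=x^γ for x≤1 (0<γ<1) and g(x)=δ−x^{−η/2} for x≥2 (0<η<1, δ>2^{−η/2}). Suppose r:(0,∞)→ℝ satisfies r(x) ≤ a^η − x^η for all x>0 with a>0. Then there exist constants B', B''>0 such that for all x>0: (x g'(x) r(x) + x g''(x))/g(x) ≤ B' − γ(1−γ)/x if x≤1, ≤ B' if 1≤x≤2, and ≤ B' − B'' x^{η/2} if x≥2. -/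
/-!
On `(0, 1]` and `[2, ∞)` the function `g` is an explicit power, so `g'` and `g''` are explicit
there (at the endpoints by continuity of `g'` and `g''`). On `(0, 1]` the drift is exactly
`γ r(x) − γ(1 − γ)/x`. On `[2, ∞)` the term `x g''` is nonpositive, and since `1 ≤ g ≤ δ`,
`x g' r / g ≤ (η/2) x^{−η/2} (a^η − x^η) / g ≤ (η/2) a^η − (η/(2δ)) x^{η/2}`. On the compact
interval `[1, 2]` the drift is bounded because `g ≥ 1`, `g' ≥ 0` and `g'`, `g''` are continuous.
-/

open Set

theorem MonotoneOn.deriv_nonneg_of_isOpen {f : ℝ → ℝ} {s : Set ℝ} (hf : MonotoneOn f s)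
    (hs : IsOpen s) {x : ℝ} (hx : x ∈ s) : 0 ≤ deriv f x :=
  derivWithin_of_isOpen (f := f) hs hx ▸ hf.derivWithin_nonneg

theorem eqOn_deriv_of_subset_closure {f φ φ' : ℝ → ℝ} {U t : Set ℝ} (hU : IsOpen U)
    (h : EqOn f φ U) (hφ : ∀ x ∈ U, HasDerivAt φ (φ' x) x) (hf : ContinuousOn (deriv f) t)
    (hφ' : ContinuousOn φ' t) (hUt : U ⊆ t) (htU : t ⊆ closure U) :
    EqOn (deriv f) φ' t := by
  refine EqOn.of_subset_closure (fun x hx => ?_) hf hφ' hUt htU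
  exact ((hφ x hx).congr_of_eventuallyEq (h.eventuallyEq_of_mem (hU.mem_nhds hx))).deriv

theorem eqOn_derivs_of_eqOn_const_add_mul_rpow {g : ℝ → ℝ} {c b p : ℝ} {U t : Set ℝ}
    (hg : ContDiffOn ℝ 2 g (Ioi 0)) (hU : IsOpen U) (hUt : U ⊆ t) (htU : t ⊆ closure U)
    (ht : t ⊆ Ioi 0) (heq : EqOn g (fun x => c + b * x ^ p) U) :
    EqOn (deriv g) (fun x => b * p * x ^ (p - 1)) t ∧
      EqOn (deriv (deriv g)) (fun x => b * p * (p - 1) * x ^ (p - 2)) t := by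
  have hne : ∀ x ∈ t, x ≠ 0 := fun x hx => (ht hx).ne'
  have hU0 : ∀ x ∈ U, x ≠ 0 := fun x hx => hne x (hUt hx)
  have h1 : EqOn (deriv g) (fun x => b * p * x ^ (p - 1)) t := by
    refine eqOn_deriv_of_subset_closure hU heq (fun x hx => ?_)
      ((hg.continuousOn_deriv_of_isOpen isOpen_Ioi (by norm_num)).mono ht)
      (by fun_prop (disch := assumption)) hUt htU
    simpa [mul_assoc] using
      ((Real.hasDerivAt_rpow_const (Or.inl (hU0 x hx))).const_mul b).const_add c
  refine ⟨h1, eqOn_deriv_of_subset_closure hU (h1.mono hUt) (fun x hx => ?_) ?_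
    (by fun_prop (disch := assumption)) hUt htU⟩
  · have h := (Real.hasDerivAt_rpow_const (p := p - 1) (Or.inl (hU0 x hx))).const_mul (b * p)
    rwa [sub_sub, one_add_one_eq_two, ← mul_assoc] at h
  · exact ((hg.deriv_of_isOpen isOpen_Ioi (by norm_num)).continuousOn_deriv_of_isOpen
      isOpen_Ioi le_rfl).mono ht

/-- The drift `(L g)/g` of `g` along `dX = √(2X) dB + X r(X) dt`, whose generator is
`L g = x g'' + x r g'`. -/
noncomputable def driftRatio (g r : ℝ → ℝ) (x : ℝ) : ℝ :=
  (x * deriv g x * r x + x * deriv (deriv g) x) / g x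

section
variable {g r : ℝ → ℝ} {x : ℝ}

theorem driftRatio_eq_of_eqOn_rpow {γ : ℝ} (hg : ContDiffOn ℝ 2 g (Ioi 0))
    (hg1 : ∀ y ∈ Ioc (0 : ℝ) 1, g y = y ^ γ) (hx : x ∈ Ioc (0 : ℝ) 1) :
    driftRatio g r x = γ * r x - γ * (1 - γ) / x := by
  obtain ⟨hg', hg''⟩ := eqOn_derivs_of_eqOn_const_add_mul_rpow (c := 0) (b := 1) (p := γ) hg
    isOpen_Ioo Ioo_subset_Ioc_self (by rw [closure_Ioo zero_ne_one]; exact Ioc_subset_Icc_self)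
    (fun y hy => hy.1) (fun y hy => by simp [hg1 y (Ioo_subset_Ioc_self hy)])
  have hx0 : 0 < x := hx.1
  have : 0 < x ^ γ := Real.rpow_pos_of_pos hx0 γ
  rw [driftRatio, hg1 x hx, hg' hx, hg'' hx]
  beta_reduce
  rw [Real.rpow_sub hx0, Real.rpow_sub hx0, Real.rpow_one, Real.rpow_two]
  field_simp
  ring

theorem driftRatio_le_of_eqOn_sub_rpow {δ η A : ℝ} (hη : 0 ≤ η) (hA : 0 ≤ A)
    (hg : ContDiffOn ℝ 2 g (Ioi 0)) (hg2 : ∀ y ≥ (2 : ℝ), g y = δ - y ^ (-(η / 2)))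
    (hx : 2 ≤ x) (hgx : 1 ≤ g x) (hr : r x ≤ A - x ^ η) :
    driftRatio g r x ≤ η / 2 * A - η / (2 * δ) * x ^ (η / 2) := by
  obtain ⟨hg', hg''⟩ := eqOn_derivs_of_eqOn_const_add_mul_rpow (c := δ) (b := -1) (p := -(η / 2))
    hg isOpen_Ioi Ioi_subset_Ici_self (closure_Ioi (2 : ℝ)).ge
    (fun _ hy => mem_Ioi.2 (two_pos.trans_le hy))
    (fun y hy => by simp [hg2 y (le_of_lt hy), sub_eq_add_neg])
  have hx0 : 0 < x := two_pos.trans_le hx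
  have hu0 : 0 < x ^ (-(η / 2)) := Real.rpow_pos_of_pos hx0 _
  have hu1 : x ^ (-(η / 2)) ≤ 1 := Real.rpow_le_one_of_one_le_of_nonpos (by linarith) (by linarith)
  have hv : x ^ (-(η / 2)) * x ^ η = x ^ (η / 2) := by
    rw [← Real.rpow_add hx0]; ring_nf
  have hxg' : x * deriv g x = η / 2 * x ^ (-(η / 2)) := by
    rw [hg' hx]
    beta_reduce
    rw [Real.rpow_sub hx0, Real.rpow_one]
    field_simp
  have hxg'' : x * deriv (deriv g) x ≤ 0 := by
    rw [hg'' hx, mul_left_comm]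
    exact mul_nonpos_of_nonpos_of_nonneg (by nlinarith) (by positivity)
  have hgx' : g x ≤ δ := by linarith [hg2 x hx]
  calc driftRatio g r x ≤ η / 2 * x ^ (-(η / 2)) * (A - x ^ η) / g x := by
        rw [driftRatio, ← hxg']
        gcongr
        have : 0 ≤ x * deriv g x := by rw [hxg']; positivity
        nlinarith
    _ = η / 2 * (x ^ (-(η / 2)) * A / g x) - η / 2 * (x ^ (η / 2) / g x) := by rw [← hv]; ring
    _ ≤ η / 2 * A - η / 2 * (x ^ (η / 2) / δ) := by
        gcongr
        rw [div_le_iff₀ (by linarith)]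
        nlinarith
    _ = η / 2 * A - η / (2 * δ) * x ^ (η / 2) := by ring

theorem exists_driftRatio_le_of_isCompact {s U : Set ℝ} {ρ : ℝ → ℝ} (hs : IsCompact s)
    (hU : IsOpen U) (hsU : s ⊆ U) (hg : ContDiffOn ℝ 2 g U) (hg0 : ∀ y ∈ s, 0 < g y)
    (hg' : ∀ y ∈ s, 0 ≤ y * deriv g y) (hρ : ContinuousOn ρ s) (hr : ∀ y ∈ s, r y ≤ ρ y) :
    ∃ K, ∀ y ∈ s, driftRatio g r y ≤ K := by
  have hcont :
      ContinuousOn (fun y => (y * deriv g y * ρ y + y * deriv (deriv g) y) / g y) s := by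
    have h1 := (hg.continuousOn_deriv_of_isOpen hU (by norm_num)).mono hsU
    have h2 := ((hg.deriv_of_isOpen hU (by norm_num)).continuousOn_deriv_of_isOpen hU
      le_rfl).mono hsU
    exact ((continuousOn_id.mul h1 |>.mul hρ).add (continuousOn_id.mul h2)).div
      (hg.continuousOn.mono hsU) fun y hy => (hg0 y hy).ne'
  obtain ⟨K, hK⟩ := hs.bddAbove_image hcont
  refine ⟨K, fun y hy => le_trans ?_ (hK ⟨y, hy, rfl⟩)⟩
  refine div_le_div_of_nonneg_right ?_ (hg0 y hy).le
  exact add_le_add_left (mul_le_mul_of_nonneg_left (hr y hy) (hg' y hy)) _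

end

theorem stmt16_general (γ η δ a : ℝ) (hγ0 : 0 < γ) (hη0 : 0 < η)
    (hδ : (2:ℝ) ^ (-(η / 2)) < δ) (ha : 0 < a)
    (g : ℝ → ℝ)
    (hg : ContDiffOn ℝ 2 g (Ioi (0:ℝ)))
    (hmono : StrictMonoOn g (Ici (0:ℝ)))
    (hg1 : ∀ x ∈ Ioc (0:ℝ) 1, g x = x ^ γ)
    (hg2 : ∀ x ≥ (2:ℝ), g x = δ - x ^ (-(η / 2)))
    (r : ℝ → ℝ) (hr : ∀ x > (0:ℝ), r x ≤ a ^ η - x ^ η) :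
    ∃ B' > (0:ℝ), ∃ B'' > (0:ℝ), ∀ x > (0:ℝ),
      (x ≤ 1 →
        (x * deriv g x * r x + x * deriv (deriv g) x) / g x ≤ B' - γ * (1 - γ) / x) ∧
      (1 ≤ x → x ≤ 2 →
        (x * deriv g x * r x + x * deriv (deriv g) x) / g x ≤ B') ∧
      (2 ≤ x →
        (x * deriv g x * r x + x * deriv (deriv g) x) / g x ≤ B' - B'' * x ^ (η / 2)) := by
  have hδ0 : 0 < δ := (Real.rpow_pos_of_pos two_pos _).trans hδ
  have hg_one : g 1 = 1 := by simp [hg1 1 ⟨one_pos, le_rfl⟩]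
  have hg_ge : ∀ x, 1 ≤ x → 1 ≤ g x := fun x hx =>
    hg_one ▸ hmono.monotoneOn (mem_Ici.2 zero_le_one) (mem_Ici.2 (zero_le_one.trans hx)) hx
  have hg' : ∀ x > (0 : ℝ), 0 ≤ deriv g x := fun _ hx =>
    (hmono.monotoneOn.mono Ioi_subset_Ici_self).deriv_nonneg_of_isOpen isOpen_Ioi hx
  obtain ⟨K, hK⟩ := exists_driftRatio_le_of_isCompact (r := r) (s := Icc 1 2)
    (ρ := fun x => a ^ η - x ^ η) isCompact_Icc isOpen_Ioi (fun x hx => one_pos.trans_le hx.1) hg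
    (fun x hx => one_pos.trans_le (hg_ge x hx.1))
    (fun x hx => mul_nonneg (zero_le_one.trans hx.1) (hg' x (one_pos.trans_le hx.1)))
    (by fun_prop (disch := intro x hx; exact (one_pos.trans_le hx.1).ne'))
    (fun x hx => hr x (one_pos.trans_le hx.1))
  have hA : 0 < a ^ η := Real.rpow_pos_of_pos ha η
  refine ⟨γ * a ^ η + |K| + η / 2 * a ^ η, by positivity, η / (2 * δ), by positivity,
    fun x hx => ⟨fun hx1 => ?_, fun hx1 hx2 => ?_, fun hx2 => ?_⟩⟩
  · change driftRatio g r x ≤ _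
    have hγr : γ * r x ≤ γ * a ^ η :=
      mul_le_mul_of_nonneg_left ((hr x hx).trans (by linarith [Real.rpow_pos_of_pos hx η]))
        hγ0.le
    have := driftRatio_eq_of_eqOn_rpow (r := r) hg hg1 ⟨hx, hx1⟩
    linarith [abs_nonneg K, mul_pos hη0 hA]
  · exact (hK x ⟨hx1, hx2⟩).trans
      (by linarith [le_abs_self K, mul_pos hγ0 hA, mul_pos hη0 hA])
  · change driftRatio g r x ≤ _
    linarith [driftRatio_le_of_eqOn_sub_rpow hη0.le hA.le hg hg2 hx2 (hg_ge x (by linarith))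
      (hr x hx), abs_nonneg K, mul_pos hγ0 hA]

/-- Drift computation for one coordinate of the Feller diffusion: with `g` increasing concave,
`C²` on `(0,∞)`, equal to `x^γ` on `(0,1]` and to `δ − x^{−η/2}` on `[2,∞)`, and
`r(x) ≤ a^η − x^η`, there are `B', B'' > 0` such that
`(x g'(x) r(x) + x g''(x))/g(x)` is bounded by `B' − γ(1−γ)/x` for `x ≤ 1`, by `B'` for
`1 ≤ x ≤ 2`, and by `B' − B'' x^{η/2}` for `x ≥ 2`. -/
theorem stmt16 (γ η δ a : ℝ) (hγ0 : 0 < γ) (hγ1 : γ < 1) (hη0 : 0 < η) (hη1 : η < 1)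
    (hδ : (2:ℝ) ^ (-(η / 2)) < δ) (ha : 0 < a)
    (g : ℝ → ℝ)
    (hg : ContDiffOn ℝ 2 g (Ioi (0:ℝ)))
    (hmono : StrictMonoOn g (Ici (0:ℝ)))
    (hconc : ConcaveOn ℝ (Ici (0:ℝ)) g)
    (hg1 : ∀ x ∈ Ioc (0:ℝ) 1, g x = x ^ γ)
    (hg2 : ∀ x ≥ (2:ℝ), g x = δ - x ^ (-(η / 2)))
    (r : ℝ → ℝ) (hr : ∀ x > (0:ℝ), r x ≤ a ^ η - x ^ η) :
    ∃ B' > (0:ℝ), ∃ B'' > (0:ℝ), ∀ x > (0:ℝ),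
      (x ≤ 1 →
        (x * deriv g x * r x + x * deriv (deriv g) x) / g x ≤ B' - γ * (1 - γ) / x) ∧
      (1 ≤ x → x ≤ 2 →
        (x * deriv g x * r x + x * deriv (deriv g) x) / g x ≤ B') ∧
      (2 ≤ x →
        (x * deriv g x * r x + x * deriv (deriv g) x) / g x ≤ B' - B'' * x ^ (η / 2)) :=
  stmt16_general γ η δ a hγ0 hη0 hδ ha g hg hmono hg1 hg2 r hr
end
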